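/- arXiv:1909.02057 — 12 statements merged into one kernel-verified Lean document; each statement's English description precedes it below -/
import Mathlib

section
/- For every finite simple graph G, the failed power domination number satisfies γ̄_p(G) ≤ F(G), where F(G) is the failed zero forcing number. -/
/-- The closed neighborhood `N[S]` of a set `S` of vertices: `S` together with
all vertices adjacent to a vertex of `S`. -/
def closedNbhdSet {V : Type*} (G : SimpleGraph V) (S : Set V) : Set V :=
  S ∪ {v | ∃ u ∈ S, G.Adj u v}

/-- The monitored sets `P^i(S)` for power domination:
`P^0(S) = N[S]` and
`P^{i+1}(S) = P^i(S) ∪ { w : {w} = N[v] \ P^i(S) for some v ∈ P^i(S) }`. -/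
def monitored {V : Type*} (G : SimpleGraph V) (S : Set V) : ℕ → Set V
  | 0 => closedNbhdSet G S
  | i + 1 => monitored G S i ∪
      {w | ∃ v ∈ monitored G S i,
        (insert v (G.neighborSet v)) \ monitored G S i = {w}}

/-- The zero-forcing sets `Q^i(S)`:
`Q^0(S) = S` and
`Q^{i+1}(S) = Q^i(S) ∪ { w : {w} = N[v] \ Q^i(S) for some v ∈ Q^i(S) }`. -/
def forced {V : Type*} (G : SimpleGraph V) (S : Set V) : ℕ → Set V
  | 0 => S
  | i + 1 => forced G S i ∪
      {w | ∃ v ∈ forced G S i,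
        (insert v (G.neighborSet v)) \ forced G S i = {w}}

/-- `S` is a power dominating set if the monitored sets eventually cover all vertices. -/
def IsPowerDominatingSet {V : Type*} (G : SimpleGraph V) (S : Set V) : Prop :=
  ∃ i, monitored G S i = Set.univ

/-- `S` is a zero forcing set if the forcing process eventually covers all vertices. -/
def IsZeroForcingSet {V : Type*} (G : SimpleGraph V) (S : Set V) : Prop :=
  ∃ i, forced G S i = Set.univ

/-- The failed power domination number: the maximum cardinality of a set of
vertices that is not a power dominating set. -/
noncomputable def failedPowerDominationNumber {V : Type*} (G : SimpleGraph V) : ℕ :=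
  sSup {k | ∃ S : Set V, ¬ IsPowerDominatingSet G S ∧ S.ncard = k}

/-- The failed zero forcing number: the maximum cardinality of a set of
vertices that is not a zero forcing set. -/
noncomputable def failedZeroForcingNumber {V : Type*} (G : SimpleGraph V) : ℕ :=
  sSup {k | ∃ S : Set V, ¬ IsZeroForcingSet G S ∧ S.ncard = k}


lemma forced_subset_monitored {V : Type*} (G : SimpleGraph V) (S : Set V) :
    ∀ i, forced G S i ⊆ monitored G S i := by
  intro i
  induction i with
  | zero => exact Set.subset_union_left
  | succ i ih =>
    intro x hx
    rcases hx with hx | ⟨v, hv, hvx⟩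
    · exact Set.subset_union_left (ih hx)
    · by_cases hxm : x ∈ monitored G S i
      · exact Set.subset_union_left hxm
      · refine Set.subset_union_right ⟨v, ih hv, ?_⟩
        apply Set.Subset.antisymm
        · intro y hy
          have : y ∈ (insert v (G.neighborSet v)) \ forced G S i :=
            ⟨hy.1, fun h => hy.2 (ih h)⟩
          rw [hvx] at this; exact this
        · intro y hy
          have hyx : y = x := hy
          rw [hyx]
          have hxN : x ∈ insert v (G.neighborSet v) := by
            have : x ∈ (insert v (G.neighborSet v)) \ forced G S i := by
              rw [hvx]; rfl
            exact this.1
          exact ⟨hxN, hxm⟩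

lemma not_pds_of_not_zfs {V : Type*} (G : SimpleGraph V) (S : Set V)
    (h : ¬ IsPowerDominatingSet G S) : ¬ IsZeroForcingSet G S := by
  rintro ⟨i, hi⟩
  exact h ⟨i, Set.eq_univ_of_univ_subset (hi ▸ forced_subset_monitored G S i)⟩

theorem failedPowerDominationNumber_le_failedZeroForcingNumber
    {V : Type*} [Fintype V] (G : SimpleGraph V) :
    failedPowerDominationNumber G ≤ failedZeroForcingNumber G := by
  have hsub : {k | ∃ S : Set V, ¬ IsPowerDominatingSet G S ∧ S.ncard = k} ⊆
      {k | ∃ S : Set V, ¬ IsZeroForcingSet G S ∧ S.ncard = k} := by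
    rintro k ⟨S, hS, hk⟩
    exact ⟨S, not_pds_of_not_zfs G S hS, hk⟩
  have hbdd : BddAbove {k | ∃ S : Set V, ¬ IsZeroForcingSet G S ∧ S.ncard = k} := by
    refine ⟨Fintype.card V, ?_⟩
    rintro k ⟨S, _, rfl⟩
    simpa [Set.ncard_univ] using Set.ncard_le_ncard (Set.subset_univ S) Set.finite_univ
  unfold failedPowerDominationNumber failedZeroForcingNumber
  rcases Set.eq_empty_or_nonempty
      {k | ∃ S : Set V, ¬ IsPowerDominatingSet G S ∧ S.ncard = k} with he | hne
  · simp [he]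
  · exact csSup_le_csSup hbdd hne hsub
end

section
/- Let G = (V,E) be a finite simple graph and S ⊆ V. If S is a power dominating set of G, then P^0(S) \ S is a zero forcing set of the induced subgraph G[V \ S]. -/
theorem pds_gives_zero_forcing_set_of_induced_complement
    {V : Type*} [Fintype V] (G : SimpleGraph V) (S : Set V)
    (h : IsPowerDominatingSet G S) :
    IsZeroForcingSet (G.induce (Sᶜ : Set V))
      {v : (Sᶜ : Set V) | (v : V) ∈ monitored G S 0 \ S} := by
  classical
  set H := G.induce (Sᶜ : Set V) with hH
  set Z : Set (Sᶜ : Set V) := {v : (Sᶜ : Set V) | (v : V) ∈ monitored G S 0 \ S} with hZ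
  have h0sub : ∀ i, monitored G S 0 ⊆ monitored G S i := by
    intro i
    induction i with
    | zero => exact le_refl _
    | succ i ih => exact ih.trans Set.subset_union_left
  have hN : ∀ v ∈ S, ∀ w, w ∈ insert v (G.neighborSet v) → w ∈ monitored G S 0 := by
    intro v hv w hw
    rcases hw with rfl | hw
    · exact Or.inl hv
    · exact Or.inr ⟨v, hv, hw⟩
  have key : ∀ i, ∀ v : (Sᶜ : Set V), (v : V) ∈ monitored G S i → v ∈ forced H Z i := by
    intro i
    induction i with
    | zero => intro v hv; exact ⟨hv, v.2⟩
    | succ i ih =>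
      intro w hw
      rcases hw with hw | ⟨v, hv, heq⟩
      · exact Or.inl (ih w hw)
      · have hwmem : (w : V) ∈ insert v (G.neighborSet v) \ monitored G S i := by
          rw [heq]; rfl
        have hvS : v ∉ S := fun hvS => hwmem.2 (h0sub i (hN v hvS _ hwmem.1))
        set v' : (Sᶜ : Set V) := ⟨v, hvS⟩ with hv'
        by_cases hwF : w ∈ forced H Z i
        · exact Or.inl hwF
        · refine Or.inr ⟨v', ih v' hv, ?_⟩
          ext u
          constructor
          · rintro ⟨hu1, hu2⟩
            have huG : (u : V) ∈ insert v (G.neighborSet v) := by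
              rcases hu1 with rfl | hu1
              · exact Set.mem_insert _ _
              · exact Set.mem_insert_of_mem _ hu1
            have huM : (u : V) ∉ monitored G S i := fun hm => hu2 (ih u hm)
            have : (u : V) ∈ ({(w : V)} : Set V) := heq ▸ ⟨huG, huM⟩
            exact Subtype.ext this
          · rintro rfl
            refine ⟨?_, hwF⟩
            rcases hwmem.1 with hwv | hadj
            · exact Set.mem_insert_iff.2 (Or.inl (Subtype.ext hwv))
            · exact Set.mem_insert_of_mem _ hadj
  obtain ⟨j, hj⟩ := h
  refine ⟨j, ?_⟩
  ext v
  simp only [Set.mem_univ, iff_true]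
  exact key j v (by rw [hj]; trivial)
end

section
/- Let G = (V,E) be a finite simple graph and S ⊆ V. Suppose that for some i ≥ 0 there is a subset S' of P^i(S) such that S' is a zero forcing set of the subgraph of G induced by (V \ P^i(S)) ∪ S'. Then S is a power dominating set of G. -/
theorem pds_of_zero_forcing_subset_of_monitored
    {V : Type*} [Fintype V] (G : SimpleGraph V) (S : Set V) (i : ℕ) (S' : Set V)
    (hsub : S' ⊆ monitored G S i)
    (hzfs : IsZeroForcingSet (G.induce (((monitored G S i)ᶜ ∪ S' : Set V)))
      {v : (((monitored G S i)ᶜ ∪ S' : Set V)) | (v : V) ∈ S'}) :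
    IsPowerDominatingSet G S := by
  obtain ⟨n, hn⟩ := hzfs
  set M : Set V := monitored G S i with hM
  set W : Set V := Mᶜ ∪ S' with hW
  set H := G.induce W with hH
  set Z : Set W := {v : W | (v : V) ∈ S'} with hZ
  have mono_step : ∀ j, monitored G S j ⊆ monitored G S (j + 1) := by
    intro j; exact Set.subset_union_left
  have mono : ∀ j k, j ≤ k → monitored G S j ⊆ monitored G S k := by
    intro j k hjk
    induction k with
    | zero => simp_all
    | succ k ih =>
      rcases Nat.lt_or_ge j (k + 1) with h | h
      · exact (ih (Nat.lt_succ_iff.mp h)).trans (mono_step k)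
      · have : j = k + 1 := le_antisymm hjk h
        subst this; exact subset_rfl
  have key : ∀ j (w : W), w ∈ forced H Z j → (w : V) ∈ monitored G S (i + j) := by
    intro j
    induction j with
    | zero =>
      intro w hw
      simpa using mono i i le_rfl (hsub hw)
    | succ j ih =>
      intro w hw
      rcases hw with hw | ⟨v, hv, heq⟩
      · exact mono (i + j) (i + j + 1) (Nat.le_succ _) (ih w hw)
      · by_cases hwm : (w : V) ∈ monitored G S (i + j)
        · exact mono (i + j) (i + j + 1) (Nat.le_succ _) hwm
        · refine Or.inr ⟨(v : V), ih v hv, ?_⟩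
          have hwv : w ∈ insert v (H.neighborSet v) := by
            have : w ∈ ({w} : Set W) := rfl
            rw [← heq] at this
            exact this.1
          ext x
          simp only [Set.mem_diff, Set.mem_insert_iff, SimpleGraph.mem_neighborSet,
            Set.mem_singleton_iff]
          constructor
          · rintro ⟨hx1, hx2⟩
            have hxM : x ∉ M := fun h => hx2 (mono i (i + j) (Nat.le_add_right _ _) h)
            have hxW : x ∈ W := Or.inl hxM
            have hxv : x ≠ (v : V) := by
              rintro rfl
              exact hx2 (ih v hv)
            have hadj : G.Adj (v : V) x := hx1.resolve_left hxv
            set x' : W := ⟨x, hxW⟩ with hx'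
            have hx'f : x' ∉ forced H Z j := fun h => hx2 (ih x' h)
            have hx'n : x' ∈ insert v (H.neighborSet v) := by
              right
              exact hadj
            have : x' ∈ ({w} : Set W) := by
              rw [← heq]; exact ⟨hx'n, hx'f⟩
            have : x' = w := this
            rw [← this]
          · rintro rfl
            refine ⟨?_, hwm⟩
            rcases hwv with h | h
            · left; exact congrArg Subtype.val h
            · right; exact h
  have hnuniv : ∀ x : V, x ∈ monitored G S (i + n) := by
    intro x
    by_cases hx : x ∈ M
    · exact mono i (i + n) (Nat.le_add_right _ _) hx
    · have hxW : x ∈ W := Or.inl hx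
      have : (⟨x, hxW⟩ : W) ∈ forced H Z n := by rw [hn]; trivial
      exact key n ⟨x, hxW⟩ this
  exact ⟨i + n, Set.eq_univ_iff_forall.mpr hnuniv⟩
end

section
/- Let G = (V,E) be a finite simple graph on n vertices. Then γ̄_p(G) = n − 1 if and only if G has an isolated vertex. -/
lemma aux_univ_pds {V : Type*} (G : SimpleGraph V) :
    IsPowerDominatingSet G Set.univ := by
  refine ⟨0, Set.eq_univ_of_univ_subset ?_⟩
  exact Set.subset_union_left

lemma aux_bdd {V : Type*} [Fintype V] (G : SimpleGraph V) :
    BddAbove {k | ∃ S : Set V, ¬ IsPowerDominatingSet G S ∧ S.ncard = k} := by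
  refine ⟨Fintype.card V, fun k hk => ?_⟩
  obtain ⟨S, -, rfl⟩ := hk
  simpa [Set.ncard_univ, Nat.card_eq_fintype_card] using
    Set.ncard_le_ncard (Set.subset_univ S) (Set.finite_univ)

lemma aux_k_lt {V : Type*} [Fintype V] (G : SimpleGraph V) {k : ℕ}
    (hk : k ∈ {k | ∃ S : Set V, ¬ IsPowerDominatingSet G S ∧ S.ncard = k}) :
    k ≤ Fintype.card V - 1 := by
  obtain ⟨S, hS, rfl⟩ := hk
  have h1 : S.ncard ≤ Fintype.card V := by
    simpa [Set.ncard_univ, Nat.card_eq_fintype_card] using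
      Set.ncard_le_ncard (Set.subset_univ S) (Set.finite_univ)
  have h2 : S.ncard ≠ Fintype.card V := by
    intro h
    have : S = Set.univ := by
      exact Set.eq_of_subset_of_ncard_le (Set.subset_univ S)
        (by simp [Set.ncard_univ, Nat.card_eq_fintype_card, h])
    exact hS (this ▸ aux_univ_pds G)
  omega

theorem failedPowerDominationNumber_eq_card_sub_one_iff
    {V : Type*} [Fintype V] (G : SimpleGraph V) :
    failedPowerDominationNumber G + 1 = Fintype.card V ↔
      ∃ v : V, ∀ u : V, ¬ G.Adj v u := by
  constructor
  · intro h
    have hpos : 0 < Fintype.card V := by omega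
    have hne : Nonempty V := Fintype.card_pos_iff.mp hpos
    obtain ⟨w⟩ := hne
    -- the set of failed cardinalities is nonempty (the empty set fails)
    have h0 : (0 : ℕ) ∈ {k | ∃ S : Set V, ¬ IsPowerDominatingSet G S ∧ S.ncard = k} := by
      refine ⟨∅, ?_, by simp⟩
      rintro ⟨i, hi⟩
      have hempty : ∀ j, monitored G (∅ : Set V) j = ∅ := by
        intro j
        induction j with
        | zero => simp [monitored, closedNbhdSet]
        | succ n ih => simp [monitored, ih]
      rw [hempty i] at hi
      exact (Set.eq_empty_iff_forall_notMem.mp hi.symm) w trivial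
    have hmem : Fintype.card V - 1 ∈
        {k | ∃ S : Set V, ¬ IsPowerDominatingSet G S ∧ S.ncard = k} := by
      have : failedPowerDominationNumber G = Fintype.card V - 1 := by omega
      rw [← this]
      exact Nat.sSup_mem ⟨0, h0⟩ (aux_bdd G)
    obtain ⟨S, hS, hcard⟩ := hmem
    -- S is not univ, pick v ∉ S
    have hSne : S ≠ Set.univ := fun hu => hS (hu ▸ aux_univ_pds G)
    obtain ⟨v, hv⟩ : ∃ v, v ∉ S := by
      by_contra hc
      push_neg at hc
      exact hSne (Set.eq_univ_of_forall hc)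
    -- every u ≠ v is in S
    have hsub : S ⊆ Set.univ \ {v} := fun x hx => ⟨trivial, fun hxv => hv (hxv ▸ hx)⟩
    have hScard : S = Set.univ \ {v} := by
      apply Set.eq_of_subset_of_ncard_le hsub
      rw [Set.ncard_diff_singleton_of_mem (Set.mem_univ v),
        Set.ncard_univ, Nat.card_eq_fintype_card, hcard]
    refine ⟨v, fun u hadj => ?_⟩
    have huv : u ≠ v := fun h => G.irrefl (h ▸ hadj)
    have huS : u ∈ S := hScard ▸ ⟨trivial, huv⟩
    apply hS
    refine ⟨0, Set.eq_univ_of_forall fun x => ?_⟩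
    by_cases hx : x = v
    · exact Or.inr ⟨u, huS, hx ▸ hadj.symm⟩
    · exact Or.inl (hScard ▸ ⟨trivial, hx⟩)
  · rintro ⟨v, hv⟩
    have hpos : 0 < Fintype.card V := Fintype.card_pos_iff.mpr ⟨v⟩
    set S : Set V := Set.univ \ {v} with hSdef
    have hvmon : ∀ i, v ∉ monitored G S i := by
      intro i
      induction i with
      | zero =>
        rintro (h | ⟨u, -, hadj⟩)
        · exact h.2 rfl
        · exact hv u hadj.symm
      | succ n ih =>
        rintro (h | ⟨u, hu, heq⟩)
        · exact ih h
        · have : v ∈ (insert u (G.neighborSet u)) \ monitored G S n := by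
            rw [heq]; rfl
          rcases this.1 with h1 | h1
          · exact this.2 (h1 ▸ hu)
          · exact hv u (SimpleGraph.adj_symm G h1)
    have hSfail : ¬ IsPowerDominatingSet G S := by
      rintro ⟨i, hi⟩
      exact hvmon i (hi ▸ Set.mem_univ v)
    have hScard : S.ncard = Fintype.card V - 1 := by
      rw [hSdef, Set.ncard_diff_singleton_of_mem (Set.mem_univ v),
        Set.ncard_univ, Nat.card_eq_fintype_card]
    have hmem : Fintype.card V - 1 ∈
        {k | ∃ T : Set V, ¬ IsPowerDominatingSet G T ∧ T.ncard = k} :=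
      ⟨S, hSfail, hScard⟩
    have h1 : failedPowerDominationNumber G = Fintype.card V - 1 := by
      apply le_antisymm
      · exact csSup_le ⟨_, hmem⟩ (fun k hk => aux_k_lt G hk)
      · exact le_csSup (aux_bdd G) hmem
    omega
end

section
/- Let G = (V,E) be a finite simple graph on n vertices. Then γ̄_p(G) = n − 2 if and only if G has no isolated vertex and G contains K_2 (a connected component consisting of a single edge) as a component. -/
section Aux

variable {V : Type*}

lemma aux_monitored_succ (G : SimpleGraph V) (S : Set V) (i : ℕ) :
    monitored G S (i+1) = monitored G S i ∪
      {w | ∃ v ∈ monitored G S i,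
        (insert v (G.neighborSet v)) \ monitored G S i = {w}} := rfl

lemma aux_monitored_const {G : SimpleGraph V} {S A : Set V}
    (h0 : monitored G S 0 = A)
    (hstep : ∀ v ∈ A, ∀ w : V, (insert v (G.neighborSet v)) \ A ≠ {w}) :
    ∀ i, monitored G S i = A := by
  intro i
  induction i with
  | zero => exact h0
  | succ i ih =>
    rw [aux_monitored_succ, ih]
    have he : {w | ∃ v ∈ A, (insert v (G.neighborSet v)) \ A = {w}} = (∅ : Set V) := by
      ext w
      simp only [Set.mem_setOf_eq, Set.mem_empty_iff_false, iff_false]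
      rintro ⟨v, hv, hw⟩
      exact hstep v hv w hw
    rw [he, Set.union_empty]

lemma aux_not_pds {G : SimpleGraph V} {S A : Set V} (x : V) (hx : x ∉ A)
    (h : ∀ i, monitored G S i = A) : ¬ IsPowerDominatingSet G S := by
  rintro ⟨i, hi⟩
  rw [h i] at hi
  exact hx (by rw [hi]; trivial)

lemma aux_empty_not_pds {G : SimpleGraph V} (x : V) :
    ¬ IsPowerDominatingSet G (∅ : Set V) := by
  refine aux_not_pds x (Set.notMem_empty x) (aux_monitored_const ?_ ?_)
  · show closedNbhdSet G ∅ = ∅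
    simp [closedNbhdSet]
  · intro v hv
    exact absurd hv (Set.notMem_empty v)

lemma aux_pds_of_forall {G : SimpleGraph V} {S : Set V}
    (h : ∀ x, x ∉ S → ∃ y ∈ S, G.Adj y x) : IsPowerDominatingSet G S := by
  refine ⟨0, ?_⟩
  ext x
  simp only [Set.mem_univ, iff_true]
  show x ∈ S ∪ {v | ∃ u ∈ S, G.Adj u v}
  by_cases hx : x ∈ S
  · exact Or.inl hx
  · exact Or.inr (h x hx)

lemma aux_isolated_not_pds {G : SimpleGraph V} {v : V}
    (hv : ∀ u, ¬ G.Adj v u) : ¬ IsPowerDominatingSet G ({v}ᶜ : Set V) := by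
  refine aux_not_pds (A := ({v}ᶜ : Set V)) v (by simp) (aux_monitored_const ?_ ?_)
  · show closedNbhdSet G {v}ᶜ = {v}ᶜ
    apply Set.Subset.antisymm
    · rintro x (hx | ⟨s, hs, hadj⟩)
      · exact hx
      · simp only [Set.mem_compl_iff, Set.mem_singleton_iff]
        rintro rfl
        exact hv s hadj.symm
    · exact Set.subset_union_left
  · intro p hp w hw
    have : w ∈ (insert p (G.neighborSet p)) \ ({v}ᶜ : Set V) := by rw [hw]; rfl
    obtain ⟨hw1, hw2⟩ := this
    simp only [Set.mem_compl_iff, Set.mem_singleton_iff, not_not] at hw2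
    subst hw2
    rcases hw1 with rfl | hw1
    · exact hp (by simp)
    · exact hv p (G.adj_symm hw1)

lemma aux_pds_of_one_forced {G : SimpleGraph V} {S : Set V} {u v : V}
    (hSc : ∀ x, x ∉ S → x = u ∨ x = v)
    (hu : u ∉ closedNbhdSet G S) (hv : v ∈ closedNbhdSet G S)
    (hadj : G.Adj v u) : IsPowerDominatingSet G S := by
  refine ⟨1, ?_⟩
  rw [aux_monitored_succ]
  ext x
  simp only [Set.mem_univ, iff_true, Set.mem_union]
  by_cases hx : x ∈ monitored G S 0
  · exact Or.inl hx
  · right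
    have hxS : x ∉ S := fun h => hx (Or.inl h)
    have hxu : x = u := by
      rcases hSc x hxS with h | h
      · exact h
      · exact absurd (h ▸ hv) hx
    subst hxu
    refine ⟨v, hv, ?_⟩
    ext z
    simp only [Set.mem_diff, Set.mem_insert_iff, SimpleGraph.mem_neighborSet,
      Set.mem_singleton_iff]
    constructor
    · rintro ⟨_, hz2⟩
      have hzS : z ∉ S := fun h => hz2 (Or.inl h)
      rcases hSc z hzS with h | h
      · exact h
      · exact absurd (h ▸ hv) hz2
    · rintro rfl
      exact ⟨Or.inr hadj, hu⟩

lemma aux_k2_not_pds {G : SimpleGraph V} {u v : V} (huv : G.Adj u v)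
    (hu : ∀ w, G.Adj u w → w = v) (hv : ∀ w, G.Adj v w → w = u) :
    ¬ IsPowerDominatingSet G (({u, v} : Set V)ᶜ) := by
  refine aux_not_pds (A := (({u, v} : Set V)ᶜ)) u (by simp) (aux_monitored_const ?_ ?_)
  · show closedNbhdSet G {u, v}ᶜ = {u, v}ᶜ
    apply Set.Subset.antisymm
    · rintro x (hx | ⟨s, hs, hadj⟩)
      · exact hx
      · simp only [Set.mem_compl_iff, Set.mem_insert_iff, Set.mem_singleton_iff, not_or]
        constructor
        · rintro rfl
          exact hs (by simp [hu s hadj.symm])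
        · rintro rfl
          exact hs (by simp [hv s hadj.symm])
    · exact Set.subset_union_left
  · intro p hp w hw
    have hwmem : w ∈ (insert p (G.neighborSet p)) \ (({u, v} : Set V)ᶜ) := by rw [hw]; rfl
    obtain ⟨hw1, hw2⟩ := hwmem
    simp only [Set.mem_compl_iff, not_not] at hw2
    rcases hw1 with rfl | hw1
    · exact hp hw2
    · rcases hw2 with rfl | rfl
      · exact hp (by simp [hu p (G.adj_symm hw1)])
      · exact hp (by simp [hv p (G.adj_symm hw1)])

lemma aux_ncard_le (S : Set V) [Fintype V] : S.ncard ≤ Fintype.card V := by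
  have := Set.ncard_le_ncard (Set.subset_univ S) Set.finite_univ
  rwa [Set.ncard_univ, Nat.card_eq_fintype_card] at this

end Aux

theorem failedPowerDominationNumber_eq_card_sub_two_iff
    {V : Type*} [Fintype V] (G : SimpleGraph V) :
    failedPowerDominationNumber G + 2 = Fintype.card V ↔
      (∀ v : V, ∃ u : V, G.Adj v u) ∧
      (∃ u v : V, G.Adj u v ∧ (∀ w : V, G.Adj u w → w = v) ∧
        ∀ w : V, G.Adj v w → w = u) := by
  classical
  set n := Fintype.card V with hn
  set K := {k | ∃ S : Set V, ¬ IsPowerDominatingSet G S ∧ S.ncard = k} with hK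
  have hbdd : BddAbove K := by
    refine ⟨n, ?_⟩
    rintro k ⟨S, -, rfl⟩
    exact aux_ncard_le S
  constructor
  · intro h
    have hn2 : 2 ≤ n := by omega
    have hsup : sSup K = n - 2 := by
      change failedPowerDominationNumber G = n - 2
      omega
    have hpos : 0 < n := by omega
    have : Nonempty V := Fintype.card_pos_iff.mp hpos
    obtain ⟨x0⟩ := this
    -- no isolated vertices
    have hniso : ∀ v : V, ∃ u : V, G.Adj v u := by
      intro v
      by_contra hc
      push_neg at hc
      have hfail := aux_isolated_not_pds (G := G) (v := v) hc
      have hmem : n - 1 ∈ K := by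
        refine ⟨({v}ᶜ : Set V), hfail, ?_⟩
        have h1 : ({v} : Set V).ncard + ({v}ᶜ : Set V).ncard = n := by
          rw [Set.ncard_add_ncard_compl, Nat.card_eq_fintype_card]
        have h2 : ({v} : Set V).ncard = 1 := Set.ncard_singleton v
        omega
      have := le_csSup hbdd hmem
      omega
    refine ⟨hniso, ?_⟩
    -- get a failing set of size n - 2
    have hKne : K.Nonempty := ⟨0, ∅, aux_empty_not_pds x0, Set.ncard_empty V⟩
    have hmem := Nat.sSup_mem hKne hbdd
    rw [hsup] at hmem
    obtain ⟨S, hSfail, hScard⟩ := hmem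
    have hcompl : (Sᶜ : Set V).ncard = 2 := by
      have h1 : S.ncard + (Sᶜ : Set V).ncard = n := by
        rw [Set.ncard_add_ncard_compl, Nat.card_eq_fintype_card]
      omega
    obtain ⟨u, v, huv, hSc⟩ := Set.ncard_eq_two.mp hcompl
    have hScmem : ∀ x, x ∉ S → x = u ∨ x = v := by
      intro x hx
      have : x ∈ (Sᶜ : Set V) := hx
      rw [hSc] at this
      exact this
    have hsub : S ⊆ closedNbhdSet G S := Set.subset_union_left
    -- key: any missing vertex with the other present would force a PDS
    have key : ∀ a b : V, (∀ x, x ∉ S → x = a ∨ x = b) →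
        a ∉ closedNbhdSet G S → b ∈ closedNbhdSet G S → False := by
      intro a b hab ha hb
      obtain ⟨y, hy⟩ := hniso a
      have hyS : y ∉ S := by
        intro hyS
        exact ha (Or.inr ⟨y, hyS, hy.symm⟩)
      have hyb : y = b := by
        rcases hab y hyS with rfl | rfl
        · exact absurd rfl hy.ne
        · rfl
      subst hyb
      exact hSfail (aux_pds_of_one_forced hab ha hb hy.symm)
    -- closedNbhdSet G S ≠ univ
    have hne : closedNbhdSet G S ≠ Set.univ := by
      intro hc
      exact hSfail ⟨0, hc⟩
    have hmiss : ∃ z, z ∉ closedNbhdSet G S := by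
      by_contra hc
      push_neg at hc
      exact hne (Set.eq_univ_of_forall hc)
    obtain ⟨z, hz⟩ := hmiss
    have hzS : z ∉ S := fun h => hz (hsub h)
    have hScmem' : ∀ x, x ∉ S → x = v ∨ x = u := by
      intro x hx
      exact (hScmem x hx).symm
    have hu' : u ∉ closedNbhdSet G S := by
      by_contra hmemu
      rcases hScmem z hzS with rfl | rfl
      · exact hz hmemu
      · exact key z u hScmem' hz hmemu
    have hv' : v ∉ closedNbhdSet G S := by
      by_contra hmemv
      exact key u v hScmem hu' hmemv
    -- now both u and v are missing: derive K2 component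
    have hnbru : ∀ w, G.Adj u w → w = v := by
      intro w hw
      have hwS : w ∉ S := fun h => hu' (Or.inr ⟨w, h, hw.symm⟩)
      rcases hScmem w hwS with rfl | rfl
      · exact absurd rfl hw.ne
      · rfl
    have hnbrv : ∀ w, G.Adj v w → w = u := by
      intro w hw
      have hwS : w ∉ S := fun h => hv' (Or.inr ⟨w, h, hw.symm⟩)
      rcases hScmem w hwS with rfl | rfl
      · rfl
      · exact absurd rfl hw.ne
    obtain ⟨y, hy⟩ := hniso u
    have := hnbru y hy
    subst this
    exact ⟨u, y, hy, hnbru, hnbrv⟩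
  · rintro ⟨hniso, u, v, huv, hu, hv⟩
    have huvne : u ≠ v := huv.ne
    have hcard2 : ({u, v} : Set V).ncard = 2 := Set.ncard_pair huvne
    have hcompl : (({u, v} : Set V)ᶜ).ncard = n - 2 := by
      have h1 : ({u, v} : Set V).ncard + (({u, v} : Set V)ᶜ).ncard = n := by
        rw [Set.ncard_add_ncard_compl, Nat.card_eq_fintype_card]
      omega
    have hn2 : 2 ≤ n := by
      have := aux_ncard_le ({u, v} : Set V)
      omega
    have hmem : n - 2 ∈ K := ⟨({u, v} : Set V)ᶜ, aux_k2_not_pds huv hu hv, hcompl⟩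
    have hub : ∀ k ∈ K, k ≤ n - 2 := by
      rintro k ⟨S, hSfail, rfl⟩
      by_contra hc
      push_neg at hc
      -- S.ncard ≥ n - 1, so Sᶜ has at most one element
      have hle : S.ncard ≤ n := aux_ncard_le S
      have h1 : S.ncard + (Sᶜ : Set V).ncard = n := by
        rw [Set.ncard_add_ncard_compl, Nat.card_eq_fintype_card]
      have hc1 : (Sᶜ : Set V).ncard ≤ 1 := by omega
      refine hSfail (aux_pds_of_forall ?_)
      intro x hx
      obtain ⟨y, hy⟩ := hniso x
      have hyne : y ≠ x := hy.ne'
      have hyS : y ∈ S := by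
        by_contra hyS
        have hxc : x ∈ (Sᶜ : Set V) := hx
        have hyc : y ∈ (Sᶜ : Set V) := hyS
        have := (Set.ncard_le_one_iff_eq (s := (Sᶜ : Set V))).mp hc1
        rcases this with h | ⟨a, h⟩
        · rw [h] at hxc; exact hxc
        · rw [h] at hxc hyc
          exact hyne (hyc.trans hxc.symm)
      exact ⟨y, hyS, hy.symm⟩
    have hsup : sSup K = n - 2 := le_antisymm (csSup_le ⟨_, hmem⟩ hub) (le_csSup hbdd hmem)
    change sSup K + 2 = n
    omega
end

section
/- Let G = (V,E) be a finite simple graph on n vertices. Then γ̄_p(G) = n − 3 if and only if G has no isolated vertex, G has no K_2 component, and G contains either (a) an induced path P_3 on vertices u, v, w (with edges uv and vw) such that u and w have no neighbors in G outside {u,v,w} (only the middle vertex v may be adjacent to other vertices of G), or (b) an induced triangle K_3 on vertices u, v, w such that at least two of these three vertices have no neighbors in G outside {u,v,w}. -/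
section Helpers

variable {V : Type*} {G : SimpleGraph V} {S P : Set V}

lemma monitored_succ (G : SimpleGraph V) (S : Set V) (i : ℕ) :
    monitored G S (i + 1) = monitored G S i ∪
      {w | ∃ v ∈ monitored G S i,
        (insert v (G.neighborSet v)) \ monitored G S i = {w}} := rfl

lemma mem_closedNbhd_left {x : V} (h : x ∈ S) : x ∈ closedNbhdSet G S :=
  Set.mem_union_left _ h

lemma mem_closedNbhd_right {x u : V} (hu : u ∈ S) (h : G.Adj u x) :
    x ∈ closedNbhdSet G S := Set.mem_union_right _ ⟨u, hu, h⟩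

lemma mem_closedNbhd_elim {x : V} (h : x ∈ closedNbhdSet G S) :
    x ∈ S ∨ ∃ u ∈ S, G.Adj u x := h

lemma monitored_mono (G : SimpleGraph V) (S : Set V) {i j : ℕ} (h : i ≤ j) :
    monitored G S i ⊆ monitored G S j := by
  induction j with
  | zero =>
    have : i = 0 := Nat.le_zero.mp h
    subst this; exact Set.Subset.rfl
  | succ j ih =>
    rcases Nat.lt_or_ge i (j + 1) with h' | h'
    · exact (ih (Nat.lt_succ_iff.mp h')).trans
        (by rw [monitored_succ]; exact Set.subset_union_left)
    · have : i = j + 1 := le_antisymm h h'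
      subst this; exact Set.Subset.rfl

lemma monitored_subset_of_closed (h0 : closedNbhdSet G S ⊆ P)
    (hcl : ∀ v ∈ P, ∀ w, w ∉ P → (insert v (G.neighborSet v)) \ P ≠ {w}) :
    ∀ i, monitored G S i ⊆ P := by
  intro i
  induction i with
  | zero => exact h0
  | succ i ih =>
    rw [monitored_succ]
    rintro x (hx | ⟨v, hv, hdiff⟩)
    · exact ih hx
    · by_contra hxP
      refine hcl v (ih hv) x hxP ?_
      apply Set.Subset.antisymm
      · rintro z ⟨hz1, hz2⟩
        have : z ∈ (insert v (G.neighborSet v)) \ monitored G S i :=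
          ⟨hz1, fun h => hz2 (ih h)⟩
        rwa [hdiff] at this
      · rw [Set.singleton_subset_iff]
        have hx' : x ∈ (insert v (G.neighborSet v)) \ monitored G S i := by
          rw [hdiff]; rfl
        exact ⟨hx'.1, hxP⟩

lemma not_pds_of_closed (hP : P ≠ Set.univ) (h0 : closedNbhdSet G S ⊆ P)
    (hcl : ∀ v ∈ P, ∀ w, w ∉ P → (insert v (G.neighborSet v)) \ P ≠ {w}) :
    ¬ IsPowerDominatingSet G S := by
  rintro ⟨i, hi⟩
  exact hP (Set.eq_univ_of_univ_subset (hi ▸ monitored_subset_of_closed h0 hcl i))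

lemma monitored_stab {i : ℕ} (h : monitored G S (i + 1) = monitored G S i) :
    ∀ j, i ≤ j → monitored G S j = monitored G S i := by
  intro j hj
  induction j with
  | zero =>
    have : i = 0 := Nat.le_zero.mp hj
    subst this; rfl
  | succ j ih =>
    rcases Nat.lt_or_ge i (j + 1) with h' | h'
    · have hji : monitored G S j = monitored G S i := ih (Nat.lt_succ_iff.mp h')
      rw [monitored_succ, hji, ← monitored_succ, h]
    · have : i = j + 1 := le_antisymm hj h'
      subst this; rfl

lemma exists_stable [Fintype V] (G : SimpleGraph V) (S : Set V) :
    ∃ i, monitored G S (i + 1) = monitored G S i := by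
  by_contra h
  push_neg at h
  have hlt : ∀ i, (monitored G S i).ncard < (monitored G S (i + 1)).ncard := by
    intro i
    refine Set.ncard_lt_ncard ?_ (Set.toFinite _)
    refine ssubset_of_subset_of_ne ?_ (fun he => h i he.symm)
    rw [monitored_succ]; exact Set.subset_union_left
  have hge : ∀ i, i ≤ (monitored G S i).ncard := by
    intro i
    induction i with
    | zero => exact Nat.zero_le _
    | succ i ih => have := hlt i; omega
  have h1 := hge (Fintype.card V + 1)
  have h2 : (monitored G S (Fintype.card V + 1)).ncard ≤ (Set.univ : Set V).ncard :=
    Set.ncard_le_ncard (Set.subset_univ _) (Set.toFinite _)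
  rw [Set.ncard_univ, Nat.card_eq_fintype_card] at h2
  omega

lemma monitored_empty (G : SimpleGraph V) : ∀ i, monitored G (∅ : Set V) i = ∅ := by
  intro i
  induction i with
  | zero =>
    show closedNbhdSet G ∅ = ∅
    simp [closedNbhdSet]
  | succ i ih => rw [monitored_succ, ih]; simp

lemma endgame (G : SimpleGraph V) (x y v : V) (hxy : x ≠ y)
    (hxv : G.Adj x v) (hyv : G.Adj y v)
    (hx : ∀ z, G.Adj x z → z = y ∨ z = v)
    (hy : ∀ z, G.Adj y z → z = x ∨ z = v) :
    ((∃ u v w : V, u ≠ w ∧ G.Adj u v ∧ G.Adj v w ∧ ¬ G.Adj u w ∧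
        (∀ t : V, G.Adj u t → t = v) ∧ (∀ t : V, G.Adj w t → t = v)) ∨
     (∃ u v w : V, G.Adj u v ∧ G.Adj v w ∧ G.Adj u w ∧
        (∀ t : V, G.Adj u t → t = v ∨ t = w) ∧
        (∀ t : V, G.Adj w t → t = u ∨ t = v))) := by
  by_cases hadj : G.Adj x y
  · exact Or.inr ⟨x, v, y, hxv, hyv.symm, hadj,
      fun t ht => (hx t ht).symm, fun t ht => hy t ht⟩
  · refine Or.inl ⟨x, v, y, hxy, hxv, hyv.symm, hadj, ?_, ?_⟩
    · intro t ht
      rcases hx t ht with rfl | rfl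
      · exact absurd ht hadj
      · rfl
    · intro t ht
      rcases hy t ht with rfl | rfl
      · exact absurd ht.symm hadj
      · rfl

lemma third_vertex {a b c x y : V} (hab : a ≠ b) (hac : a ≠ c) (hbc : b ≠ c)
    (hx : x = a ∨ x = b ∨ x = c) (hy : y = a ∨ y = b ∨ y = c) (hxy : x ≠ y) :
    ∃ r, r ≠ x ∧ r ≠ y ∧ (r = a ∨ r = b ∨ r = c) ∧
      ∀ z, (z = a ∨ z = b ∨ z = c) → z = x ∨ z = y ∨ z = r := by
  rcases hx with rfl | rfl | rfl <;> rcases hy with rfl | rfl | rfl <;>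
    first
      | exact absurd rfl hxy
      | exact ⟨a, by tauto, by tauto, by tauto, by tauto⟩
      | exact ⟨b, by tauto, by tauto, by tauto, by tauto⟩
      | exact ⟨c, by tauto, by tauto, by tauto, by tauto⟩

end Helpers

section Main

variable {V : Type*} [Fintype V] {G : SimpleGraph V}

lemma small_compl_pds (G : SimpleGraph V)
    (h1 : ∀ v : V, ∃ u : V, G.Adj v u)
    (h2 : ¬ ∃ u v : V, G.Adj u v ∧ (∀ w : V, G.Adj u w → w = v) ∧
        ∀ w : V, G.Adj v w → w = u)
    (S : Set V) (hS : Sᶜ.ncard ≤ 2) : IsPowerDominatingSet G S := by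
  refine ⟨1, Set.eq_univ_of_forall fun x => ?_⟩
  by_cases hx0 : x ∈ monitored G S 0
  · rw [monitored_succ]; exact Or.inl hx0
  · have hxS : x ∉ S := fun h => hx0 (mem_closedNbhd_left h)
    have hxn : ∀ z, z ∈ S → ¬ G.Adj z x := fun z hz hadj =>
      hx0 (mem_closedNbhd_right hz hadj)
    obtain ⟨y, hxy⟩ := h1 x
    have hyS : y ∉ S := fun h => hxn y h hxy.symm
    have hcompl : ∀ z, z ∉ S → z = x ∨ z = y := by
      intro z hz
      by_contra hc
      push_neg at hc
      have hsub : ({x, y, z} : Set V) ⊆ Sᶜ := by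
        intro t ht
        simp only [Set.mem_insert_iff, Set.mem_singleton_iff] at ht
        rcases ht with rfl | rfl | rfl <;> assumption
      have h3 : ({x, y, z} : Set V).ncard = 3 :=
        Set.ncard_eq_three.mpr ⟨x, y, z, hxy.ne, Ne.symm hc.1, Ne.symm hc.2, rfl⟩
      have := Set.ncard_le_ncard hsub (Set.toFinite _)
      omega
    have hy0 : y ∈ monitored G S 0 := by
      by_contra hy0
      have hyn : ∀ z, z ∈ S → ¬ G.Adj z y := fun z hz hadj =>
        hy0 (mem_closedNbhd_right hz hadj)
      refine h2 ⟨x, y, hxy, ?_, ?_⟩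
      · intro w hw
        have hwS : w ∉ S := fun h => hxn w h hw.symm
        rcases hcompl w hwS with rfl | rfl
        · exact absurd hw (G.irrefl)
        · rfl
      · intro w hw
        have hwS : w ∉ S := fun h => hyn w h hw.symm
        rcases hcompl w hwS with rfl | rfl
        · rfl
        · exact absurd hw (G.irrefl)
    rw [monitored_succ]
    refine Or.inr ⟨y, hy0, ?_⟩
    apply Set.Subset.antisymm
    · rintro z ⟨hz1, hz2⟩
      have hzS : z ∉ S := fun h => hz2 (mem_closedNbhd_left h)
      have hzy : z ≠ y := fun h => hz2 (h ▸ hy0)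
      rcases hcompl z hzS with rfl | rfl
      · rfl
      · exact absurd rfl hzy
    · rw [Set.singleton_subset_iff]
      exact ⟨Set.mem_insert_iff.mpr (Or.inr hxy.symm), hx0⟩

end Main

section Main2

variable {V : Type*} [Fintype V] {G : SimpleGraph V}

lemma fpds_path {u v w : V} (huw : u ≠ w) (huv : G.Adj u v) (hvw : G.Adj v w)
    (hu : ∀ x, G.Adj u x → x = v) (hw : ∀ x, G.Adj w x → x = v) :
    ¬ IsPowerDominatingSet G (({u, v, w} : Set V)ᶜ) := by
  apply not_pds_of_closed (P := ({u, w} : Set V)ᶜ)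
  · intro h
    exact (Set.eq_univ_iff_forall.mp h u) (Set.mem_insert u {w})
  · intro z hz
    rcases mem_closedNbhd_elim hz with hzS | ⟨s, hs, hadj⟩
    · intro hzc
      apply hzS
      rcases hzc with rfl | hzc
      · exact Set.mem_insert _ _
      · rw [Set.mem_singleton_iff] at hzc; subst hzc
        exact Or.inr (Or.inr rfl)
    · intro hzc
      rcases hzc with rfl | hzc
      · have hsv := hu s hadj.symm
        subst hsv
        exact hs (Or.inr (Or.inl rfl))
      · rw [Set.mem_singleton_iff] at hzc; subst hzc
        have hsv := hw s hadj.symm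
        subst hsv
        exact hs (Or.inr (Or.inl rfl))
  · intro p hp z hz hdiff
    have hz' : z ∈ ({u, w} : Set V) := Set.not_notMem.mp (fun hc => hz hc)
    by_cases hpv : p = v
    · subst hpv
      have hu' : u ∈ (insert p (G.neighborSet p)) \ ({u, w} : Set V)ᶜ :=
        ⟨Set.mem_insert_iff.mpr (Or.inr huv.symm),
          Set.notMem_compl_iff.mpr (Set.mem_insert u {w})⟩
      have hw' : w ∈ (insert p (G.neighborSet p)) \ ({u, w} : Set V)ᶜ :=
        ⟨Set.mem_insert_iff.mpr (Or.inr hvw),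
          Set.notMem_compl_iff.mpr (Or.inr rfl)⟩
      rw [hdiff, Set.mem_singleton_iff] at hu' hw'
      exact huw (hu'.trans hw'.symm)
    · have hzd : z ∈ (insert p (G.neighborSet p)) \ ({u, w} : Set V)ᶜ := by
        rw [hdiff]; rfl
      have hadj : G.Adj p z := by
        rcases Set.mem_insert_iff.mp hzd.1 with h | h
        · exact absurd (h ▸ hp) hz
        · exact h
      rcases hz' with rfl | hzc
      · exact hpv (hu p hadj.symm)
      · rw [Set.mem_singleton_iff] at hzc; subst hzc
        exact hpv (hw p hadj.symm)

lemma fpds_triangle {u v w : V} (huv : G.Adj u v) (hvw : G.Adj v w) (huw : G.Adj u w)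
    (hu : ∀ x, G.Adj u x → x = v ∨ x = w) (hw : ∀ x, G.Adj w x → x = u ∨ x = v) :
    ¬ IsPowerDominatingSet G (({u, v, w} : Set V)ᶜ) := by
  apply not_pds_of_closed (P := ({u, w} : Set V)ᶜ)
  · intro h
    exact (Set.eq_univ_iff_forall.mp h u) (Set.mem_insert u {w})
  · intro z hz
    rcases mem_closedNbhd_elim hz with hzS | ⟨s, hs, hadj⟩
    · intro hzc
      apply hzS
      rcases hzc with rfl | hzc
      · exact Set.mem_insert _ _
      · rw [Set.mem_singleton_iff] at hzc; subst hzc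
        exact Or.inr (Or.inr rfl)
    · intro hzc
      rcases hzc with rfl | hzc
      · rcases hu s hadj.symm with rfl | rfl
        · exact hs (Or.inr (Or.inl rfl))
        · exact hs (Or.inr (Or.inr rfl))
      · rw [Set.mem_singleton_iff] at hzc; subst hzc
        rcases hw s hadj.symm with rfl | rfl
        · exact hs (Or.inl rfl)
        · exact hs (Or.inr (Or.inl rfl))
  · intro p hp z hz hdiff
    have hz' : z ∈ ({u, w} : Set V) := Set.not_notMem.mp (fun hc => hz hc)
    by_cases hpv : p = v
    · subst hpv
      have hu' : u ∈ (insert p (G.neighborSet p)) \ ({u, w} : Set V)ᶜ :=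
        ⟨Set.mem_insert_iff.mpr (Or.inr huv.symm),
          Set.notMem_compl_iff.mpr (Set.mem_insert u {w})⟩
      have hw' : w ∈ (insert p (G.neighborSet p)) \ ({u, w} : Set V)ᶜ :=
        ⟨Set.mem_insert_iff.mpr (Or.inr hvw),
          Set.notMem_compl_iff.mpr (Or.inr rfl)⟩
      rw [hdiff, Set.mem_singleton_iff] at hu' hw'
      exact huw.ne (hu'.trans hw'.symm)
    · have hzd : z ∈ (insert p (G.neighborSet p)) \ ({u, w} : Set V)ᶜ := by
        rw [hdiff]; rfl
      have hadj : G.Adj p z := by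
        rcases Set.mem_insert_iff.mp hzd.1 with h | h
        · exact absurd (h ▸ hp) hz
        · exact h
      rcases hz' with rfl | hzc
      · rcases hu p hadj.symm with rfl | rfl
        · exact hpv rfl
        · exact hp (Or.inr rfl)
      · rw [Set.mem_singleton_iff] at hzc; subst hzc
        rcases hw p hadj.symm with rfl | rfl
        · exact hp (Or.inl rfl)
        · exact hpv rfl

lemma compl_triple_card {u v w : V} (huv : u ≠ v) (huw : u ≠ w) (hvw : v ≠ w) :
    (({u, v, w} : Set V)ᶜ).ncard + 3 = Fintype.card V := by
  have h3 : ({u, v, w} : Set V).ncard = 3 :=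
    Set.ncard_eq_three.mpr ⟨u, v, w, huv, huw, hvw, rfl⟩
  have h := Set.ncard_add_ncard_compl ({u, v, w} : Set V) (Set.toFinite _) (Set.toFinite _)
  rw [Nat.card_eq_fintype_card, h3] at h
  omega

end Main2


theorem failedPowerDominationNumber_eq_card_sub_three_iff
    {V : Type*} [Fintype V] (G : SimpleGraph V) :
    failedPowerDominationNumber G + 3 = Fintype.card V ↔
      (∀ v : V, ∃ u : V, G.Adj v u) ∧
      (¬ ∃ u v : V, G.Adj u v ∧ (∀ w : V, G.Adj u w → w = v) ∧
        ∀ w : V, G.Adj v w → w = u) ∧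
      ((∃ u v w : V, u ≠ w ∧ G.Adj u v ∧ G.Adj v w ∧ ¬ G.Adj u w ∧
          (∀ x : V, G.Adj u x → x = v) ∧ (∀ x : V, G.Adj w x → x = v)) ∨
       (∃ u v w : V, G.Adj u v ∧ G.Adj v w ∧ G.Adj u w ∧
          (∀ x : V, G.Adj u x → x = v ∨ x = w) ∧
          (∀ x : V, G.Adj w x → x = u ∨ x = v))) := by
  have hbdd : BddAbove {k | ∃ S : Set V, ¬ IsPowerDominatingSet G S ∧ S.ncard = k} := by
    refine ⟨Fintype.card V, ?_⟩
    rintro k ⟨S, -, rfl⟩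
    have h := Set.ncard_le_ncard (Set.subset_univ S) (Set.toFinite _)
    rwa [Set.ncard_univ, Nat.card_eq_fintype_card] at h
  constructor
  · intro hsup
    simp only [failedPowerDominationNumber] at hsup
    have hcard3 : 3 ≤ Fintype.card V := by omega
    have hVne : Nonempty V := Fintype.card_pos_iff.mp (by omega)
    have h0T : 0 ∈ {k | ∃ S : Set V, ¬ IsPowerDominatingSet G S ∧ S.ncard = k} := by
      refine ⟨∅, ?_, Set.ncard_empty V⟩
      rintro ⟨i, hi⟩
      rw [monitored_empty G i] at hi
      exact Set.empty_ne_univ hi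
    have h1 : ∀ v : V, ∃ u : V, G.Adj v u := by
      by_contra h
      push_neg at h
      obtain ⟨v, hv⟩ := h
      have hfp : ¬ IsPowerDominatingSet G (({v} : Set V)ᶜ) := by
        apply not_pds_of_closed (P := ({v} : Set V)ᶜ)
        · intro h'
          exact (Set.eq_univ_iff_forall.mp h' v) rfl
        · intro z hz
          rcases mem_closedNbhd_elim hz with hzS | ⟨s, hs, hadj⟩
          · exact hzS
          · intro hzc
            rw [Set.mem_singleton_iff] at hzc
            subst hzc
            exact hv s hadj.symm
        · intro p hp z hz hdiff
          have hz' : z = v := Set.not_notMem.mp (fun hc => hz hc)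
          subst hz'
          have hmem : z ∈ (insert p (G.neighborSet p)) \ ({z} : Set V)ᶜ := by
            rw [hdiff]; rfl
          rcases Set.mem_insert_iff.mp hmem.1 with h' | h'
          · exact hp (Set.mem_singleton_iff.mpr h'.symm)
          · exact hv p ((G.mem_neighborSet _ _).mp h').symm
      have hc : (({v} : Set V)ᶜ).ncard = Fintype.card V - 1 := by
        have h := Set.ncard_add_ncard_compl ({v} : Set V) (Set.toFinite _) (Set.toFinite _)
        rw [Nat.card_eq_fintype_card, Set.ncard_singleton] at h
        omega
      have hmem1 : Fintype.card V - 1 ∈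
          {k | ∃ S : Set V, ¬ IsPowerDominatingSet G S ∧ S.ncard = k} := ⟨({v} : Set V)ᶜ, hfp, hc⟩
      have := le_csSup hbdd hmem1
      omega
    have h2 : ¬ ∃ u v : V, G.Adj u v ∧ (∀ w : V, G.Adj u w → w = v) ∧
        ∀ w : V, G.Adj v w → w = u := by
      rintro ⟨u, v, huv, hu, hv⟩
      have hfp : ¬ IsPowerDominatingSet G (({u, v} : Set V)ᶜ) := by
        apply not_pds_of_closed (P := ({u, v} : Set V)ᶜ)
        · intro h'
          exact (Set.eq_univ_iff_forall.mp h' u) (Set.mem_insert _ _)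
        · intro z hz
          rcases mem_closedNbhd_elim hz with hzS | ⟨s, hs, hadj⟩
          · exact hzS
          · intro hzc
            rcases hzc with rfl | hzc
            · have hs' := hu s hadj.symm
              subst hs'
              exact hs (Or.inr rfl)
            · rw [Set.mem_singleton_iff] at hzc
              subst hzc
              have hs' := hv s hadj.symm
              subst hs'
              exact hs (Or.inl rfl)
        · intro p hp z hz hdiff
          have hz' : z ∈ ({u, v} : Set V) := Set.not_notMem.mp hz
          have hmem2 : z ∈ (insert p (G.neighborSet p)) \ ({u, v} : Set V)ᶜ := by
            rw [hdiff]; rfl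
          have hadjpz : G.Adj p z := by
            rcases Set.mem_insert_iff.mp hmem2.1 with h' | h'
            · exact absurd (h' ▸ hp) hz
            · exact h'
          rcases hz' with rfl | hzc
          · have hpv := hu p hadjpz.symm
            subst hpv
            exact hp (Or.inr rfl)
          · rw [Set.mem_singleton_iff] at hzc
            subst hzc
            have hpu := hv p hadjpz.symm
            subst hpu
            exact hp (Or.inl rfl)
      have hc : (({u, v} : Set V)ᶜ).ncard = Fintype.card V - 2 := by
        have h := Set.ncard_add_ncard_compl ({u, v} : Set V) (Set.toFinite _) (Set.toFinite _)
        rw [Nat.card_eq_fintype_card, Set.ncard_pair huv.ne] at h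
        omega
      have hmem2 : Fintype.card V - 2 ∈
          {k | ∃ S : Set V, ¬ IsPowerDominatingSet G S ∧ S.ncard = k} :=
        ⟨({u, v} : Set V)ᶜ, hfp, hc⟩
      have := le_csSup hbdd hmem2
      omega
    refine ⟨h1, h2, ?_⟩
    have hmemT := Nat.sSup_mem ⟨0, h0T⟩ hbdd
    obtain ⟨S, hSnot, hScard⟩ := hmemT
    have hScard' : S.ncard = Fintype.card V - 3 := by omega
    obtain ⟨i, hstab⟩ := exists_stable G S
    have hPne : monitored G S i ≠ Set.univ := fun h => hSnot ⟨i, h⟩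
    have hS0 : closedNbhdSet G S ⊆ monitored G S i := monitored_mono G S (Nat.zero_le i)
    have star : ∀ v ∈ monitored G S i, ∀ w,
        (insert v (G.neighborSet v)) \ monitored G S i = {w} → False := by
      intro v hv w hdiff
      have hw1 : w ∈ (insert v (G.neighborSet v)) \ monitored G S i := by rw [hdiff]; rfl
      have hw2 : w ∈ monitored G S (i + 1) := by
        rw [monitored_succ]
        exact Or.inr ⟨v, hv, hdiff⟩
      rw [hstab] at hw2
      exact hw1.2 hw2
    have starstar : ∀ v ∈ monitored G S i, ∀ w, w ∉ monitored G S i → G.Adj v w →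
        ∃ w', w' ≠ w ∧ w' ∉ monitored G S i ∧ G.Adj v w' := by
      intro v hv w hw hadj
      have hne : (insert v (G.neighborSet v)) \ monitored G S i ≠ {w} :=
        fun h => star v hv w h
      have hwD : w ∈ (insert v (G.neighborSet v)) \ monitored G S i := ⟨Or.inr hadj, hw⟩
      have hnsub : ¬ (insert v (G.neighborSet v)) \ monitored G S i ⊆ {w} := by
        intro hsub
        exact hne (Set.Subset.antisymm hsub (Set.singleton_subset_iff.mpr hwD))
      obtain ⟨w', hw'D, hw'ne⟩ := Set.not_subset.mp hnsub
      rw [Set.mem_singleton_iff] at hw'ne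
      have hadj' : G.Adj v w' := by
        rcases Set.mem_insert_iff.mp hw'D.1 with h' | h'
        · exact absurd (h' ▸ hv) hw'D.2
        · exact h'
      exact ⟨w', hw'ne, hw'D.2, hadj'⟩
    have hnbr : ∀ m, m ∉ monitored G S i → ∀ z, G.Adj m z → z ∉ S := by
      intro m hm z hz hzS
      exact hm (hS0 (mem_closedNbhd_right hzS hz.symm))
    have hSsub : S ⊆ monitored G S i := fun x hx => hS0 (mem_closedNbhd_left hx)
    have hcS : Sᶜ.ncard = 3 := by
      have h := Set.ncard_add_ncard_compl S (Set.toFinite _) (Set.toFinite _)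
      rw [Nat.card_eq_fintype_card] at h
      omega
    obtain ⟨a, b, c, hab, hac, hbc, habc⟩ := Set.ncard_eq_three.mp hcS
    have hmemabc : ∀ z : V, z ∉ S → z = a ∨ z = b ∨ z = c := by
      intro z hz
      have hz' : z ∈ Sᶜ := hz
      rw [habc] at hz'
      simpa using hz'
    obtain ⟨m, hm⟩ := (Set.ne_univ_iff_exists_notMem _).mp hPne
    have hmS : m ∉ S := fun h => hm (hSsub h)
    obtain ⟨t, hmt⟩ := h1 m
    have htS : t ∉ S := hnbr m hm t hmt
    have hmtne : m ≠ t := hmt.ne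
    by_cases htP : t ∈ monitored G S i
    · obtain ⟨m', hm'ne, hm'P, htm'⟩ := starstar t htP m hm hmt.symm
      have hm'S : m' ∉ S := fun h => hm'P (hSsub h)
      have hmm' : m ≠ m' := fun h => hm'ne h.symm
      have hm't : m' ≠ t := fun h => hm'P (h ▸ htP)
      have hsub3 : ({m, m', t} : Set V) ⊆ Sᶜ := by
        intro x hx
        rcases hx with rfl | rfl | hx
        · exact hmS
        · exact hm'S
        · rw [Set.mem_singleton_iff] at hx; subst hx; exact htS
      have h33 : ({m, m', t} : Set V).ncard = 3 :=
        Set.ncard_eq_three.mpr ⟨m, m', t, hmm', hmtne, hm't, rfl⟩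
      have heq3 : ({m, m', t} : Set V) = Sᶜ :=
        Set.eq_of_subset_of_ncard_le hsub3 (by rw [hcS, h33]) (Set.toFinite _)
      have hmem3 : ∀ z : V, z ∉ S → z = m ∨ z = m' ∨ z = t := by
        intro z hz
        have hz' : z ∈ Sᶜ := hz
        rw [← heq3] at hz'
        simpa using hz'
      refine endgame G m m' t hmm' hmt htm'.symm ?_ ?_
      · intro z hzadj
        rcases hmem3 z (hnbr m hm z hzadj) with rfl | h | h
        · exact absurd hzadj (G.irrefl)
        · exact Or.inl h
        · exact Or.inr h
      · intro z hzadj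
        rcases hmem3 z (hnbr m' hm'P z hzadj) with h | rfl | h
        · exact Or.inl h
        · exact absurd hzadj (G.irrefl)
        · exact Or.inr h
    · obtain ⟨r, hrm, hrt, hrabc, hthree⟩ :=
        third_vertex hab hac hbc (hmemabc m hmS) (hmemabc t htS) hmtne
      have hrS : r ∉ S := by
        have hr' : r ∈ Sᶜ := by
          rw [habc]
          rcases hrabc with rfl | rfl | rfl <;> simp
        exact hr'
      have hmem3 : ∀ z : V, z ∉ S → z = m ∨ z = t ∨ z = r := fun z hz =>
        hthree z (hmemabc z hz)
      by_cases hrP : r ∈ monitored G S i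
      · have hor : G.Adj r m ∨ G.Adj r t := by
          by_contra hc
          push_neg at hc
          refine h2 ⟨m, t, hmt, ?_, ?_⟩
          · intro z hzadj
            rcases hmem3 z (hnbr m hm z hzadj) with rfl | h | rfl
            · exact absurd hzadj (G.irrefl)
            · exact h
            · exact absurd hzadj.symm hc.1
          · intro z hzadj
            rcases hmem3 z (hnbr t htP z hzadj) with h | rfl | rfl
            · exact h
            · exact absurd hzadj (G.irrefl)
            · exact absurd hzadj.symm hc.2
        have hboth : G.Adj r m ∧ G.Adj r t := by
          rcases hor with h | h
          · refine ⟨h, ?_⟩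
            obtain ⟨w', hw'ne, hw'P, hrw'⟩ := starstar r hrP m hm h
            have hw't : w' = t := by
              rcases hmem3 w' (fun hw => hw'P (hSsub hw)) with rfl | h' | rfl
              · exact absurd rfl hw'ne
              · exact h'
              · exact absurd hrP hw'P
            exact hw't ▸ hrw'
          · refine ⟨?_, h⟩
            obtain ⟨w', hw'ne, hw'P, hrw'⟩ := starstar r hrP t htP h
            have hw'm : w' = m := by
              rcases hmem3 w' (fun hw => hw'P (hSsub hw)) with h' | rfl | rfl
              · exact h'
              · exact absurd rfl hw'ne
              · exact absurd hrP hw'P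
            exact hw'm ▸ hrw'
        refine endgame G m t r hmtne hboth.1.symm hboth.2.symm ?_ ?_
        · intro z hzadj
          rcases hmem3 z (hnbr m hm z hzadj) with rfl | h | h
          · exact absurd hzadj (G.irrefl)
          · exact Or.inl h
          · exact Or.inr h
        · intro z hzadj
          rcases hmem3 z (hnbr t htP z hzadj) with h | rfl | h
          · exact Or.inl h
          · exact absurd hzadj (G.irrefl)
          · exact Or.inr h
      · obtain ⟨s, hrs⟩ := h1 r
        have hsS : s ∉ S := hnbr r hrP s hrs
        rcases hmem3 s hsS with rfl | rfl | rfl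
        · refine endgame G t r s (fun h => hrt h.symm) hmt.symm hrs ?_ ?_
          · intro z hzadj
            rcases hmem3 z (hnbr t htP z hzadj) with h | rfl | h
            · exact Or.inr h
            · exact absurd hzadj (G.irrefl)
            · exact Or.inl h
          · intro z hzadj
            rcases hmem3 z (hnbr r hrP z hzadj) with h | h | rfl
            · exact Or.inr h
            · exact Or.inl h
            · exact absurd hzadj (G.irrefl)
        · refine endgame G m r s (fun h => hrm h.symm) hmt hrs ?_ ?_
          · intro z hzadj
            rcases hmem3 z (hnbr m hm z hzadj) with rfl | h | h
            · exact absurd hzadj (G.irrefl)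
            · exact Or.inr h
            · exact Or.inl h
          · intro z hzadj
            rcases hmem3 z (hnbr r hrP z hzadj) with h | h | rfl
            · exact Or.inl h
            · exact Or.inr h
            · exact absurd hzadj (G.irrefl)
        · exact absurd hrs (G.irrefl)
  · rintro ⟨h1, h2, h3⟩
    obtain ⟨S₀, hS₀, hS₀c⟩ : ∃ S₀ : Set V,
        ¬ IsPowerDominatingSet G S₀ ∧ S₀.ncard + 3 = Fintype.card V := by
      rcases h3 with ⟨u, v, w, huw, huv, hvw, hnuw, hu, hw⟩ | ⟨u, v, w, huv, hvw, huw, hu, hw⟩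
      · exact ⟨({u, v, w} : Set V)ᶜ, fpds_path huw huv hvw hu hw,
          compl_triple_card huv.ne huw hvw.ne⟩
      · exact ⟨({u, v, w} : Set V)ᶜ, fpds_triangle huv hvw huw hu hw,
          compl_triple_card huv.ne huw.ne hvw.ne⟩
    have hub : ∀ k ∈ {k | ∃ S : Set V, ¬ IsPowerDominatingSet G S ∧ S.ncard = k},
        k ≤ Fintype.card V - 3 := by
      rintro k ⟨S, hnp, rfl⟩
      by_contra hk
      push_neg at hk
      refine hnp (small_compl_pds G h1 h2 S ?_)
      have h := Set.ncard_add_ncard_compl S (Set.toFinite _) (Set.toFinite _)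
      rw [Nat.card_eq_fintype_card] at h
      omega
    have hmem : Fintype.card V - 3 ∈
        {k | ∃ S : Set V, ¬ IsPowerDominatingSet G S ∧ S.ncard = k} :=
      ⟨S₀, hS₀, by omega⟩
    have heq : sSup {k | ∃ S : Set V, ¬ IsPowerDominatingSet G S ∧ S.ncard = k} =
        Fintype.card V - 3 :=
      le_antisymm (csSup_le ⟨_, hmem⟩ hub) (le_csSup ⟨Fintype.card V - 3, hub⟩ hmem)
    simp only [failedPowerDominationNumber]
    omega
end

section
/- For every n ≥ 1, the path graph P_n on n vertices has failed power domination number γ̄_p(P_n) = 0; that is, every nonempty subset of vertices of P_n is a power dominating set. -/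
set_option linter.unreachableTactic false
set_option linter.unusedTactic false
set_option linter.unusedVariables false

open SimpleGraph

-- neighbors of a, excluding a known neighbor s, form a subsingleton in the path graph
lemma path_nbhd_aux {n : ℕ} {a s : Fin n} (hs : (pathGraph n).Adj a s) :
    ((pathGraph n).neighborSet a \ {s}).Subsingleton := by
  intro b hb c hc
  simp only [Set.mem_diff, mem_neighborSet, Set.mem_singleton_iff] at hb hc
  rw [pathGraph_adj] at hs
  have hab := hb.1; have hac := hc.1
  rw [pathGraph_adj] at hab hac
  have hbs : b ≠ s := hb.2
  have hcs : c ≠ s := hc.2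
  have : (b : ℕ) = c := by
    rcases hab with h1 | h1 <;> rcases hac with h2 | h2 <;> rcases hs with h3 | h3 <;>
      first
        | omega
        | (exfalso; apply hbs; apply Fin.ext; omega)
        | (exfalso; apply hcs; apply Fin.ext; omega)
  exact Fin.ext this

lemma mono_monitored {V : Type*} (G : SimpleGraph V) (S : Set V) (i : ℕ) :
    monitored G S i ⊆ monitored G S (i+1) := Set.subset_union_left

def MonInv {V : Type*} (G : SimpleGraph V) (M : Set V) : Prop :=
  ∀ a ∈ M, ((insert a (G.neighborSet a)) \ M).Subsingleton

lemma inv_monitored {n : ℕ} (S : Set (Fin n)) (hS : S.Nonempty) (i : ℕ) :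
    MonInv (pathGraph n) (monitored (pathGraph n) S i) := by
  induction i with
  | zero =>
    intro a ha
    rcases ha with haS | ⟨u, hu, hadj⟩
    · -- a ∈ S: all closed-neighbors are in N[S]
      intro b hb c hc
      exfalso
      rcases hb with ⟨hb1, hb2⟩
      apply hb2
      rcases hb1 with rfl | hb1
      · exact Or.inl haS
      · exact Or.inr ⟨a, haS, hb1⟩
    · -- a adjacent to u ∈ S
      intro b hb c hc
      have hsub : (insert a ((pathGraph n).neighborSet a)) \ closedNbhdSet (pathGraph n) S
          ⊆ (pathGraph n).neighborSet a \ {u} := by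
        intro x hx
        rcases hx with ⟨hx1, hx2⟩
        constructor
        · rcases hx1 with rfl | hx1
          · exact absurd (Or.inr ⟨u, hu, hadj⟩) hx2
          · exact hx1
        · rintro rfl
          exact hx2 (Or.inl hu)
      exact path_nbhd_aux hadj.symm (hsub hb) (hsub hc)
  | succ i ih =>
    intro a ha
    rcases ha with haM | ⟨v, hv, hveq⟩
    · have h := ih a haM
      intro b hb c hc
      have hsub : (insert a ((pathGraph n).neighborSet a)) \ monitored (pathGraph n) S (i+1)
          ⊆ (insert a ((pathGraph n).neighborSet a)) \ monitored (pathGraph n) S i :=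
        Set.diff_subset_diff_right (mono_monitored _ _ _)
      exact h (hsub hb) (hsub hc)
    · -- a was forced by v
      have haNv : a ∈ (insert v ((pathGraph n).neighborSet v)) \ monitored (pathGraph n) S i := by
        rw [hveq]; rfl
      have hav : (pathGraph n).Adj v a := by
        rcases haNv.1 with rfl | h
        · exact absurd hv haNv.2
        · exact h
      have hsub : (insert a ((pathGraph n).neighborSet a)) \ monitored (pathGraph n) S (i+1)
          ⊆ (pathGraph n).neighborSet a \ {v} := by
        intro x hx
        rcases hx with ⟨hx1, hx2⟩
        constructor
        · rcases hx1 with rfl | hx1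
          · exact absurd (Or.inr ⟨v, hv, hveq⟩) hx2
          · exact hx1
        · rintro rfl
          exact hx2 (Or.inl hv)
      intro b hb c hc
      exact path_nbhd_aux hav.symm (hsub hb) (hsub hc)

lemma progress {n : ℕ} (S : Set (Fin n)) (i : ℕ)
    (hinv : MonInv (pathGraph n) (monitored (pathGraph n) S i))
    (hne : (monitored (pathGraph n) S i).Nonempty)
    (hnu : monitored (pathGraph n) S i ≠ Set.univ) :
    ∃ b, b ∉ monitored (pathGraph n) S i ∧ b ∈ monitored (pathGraph n) S (i+1) := by
  obtain ⟨x, hx⟩ := hne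
  obtain ⟨y, hy⟩ : ∃ y, y ∉ monitored (pathGraph n) S i := by
    by_contra h
    push_neg at h
    exact hnu (Set.eq_univ_of_forall h)
  obtain ⟨m, rfl⟩ : ∃ m, n = m + 1 := ⟨n - 1, by have := x.isLt; omega⟩
  obtain ⟨p⟩ := (pathGraph_connected m).preconnected x y
  obtain ⟨d, _, hd1, hd2⟩ := p.exists_boundary_dart _ hx hy
  refine ⟨d.snd, hd2, Or.inr ⟨d.fst, hd1, ?_⟩⟩
  have hmem : d.snd ∈ (insert d.fst ((pathGraph (m+1)).neighborSet d.fst)) \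
      monitored (pathGraph (m+1)) S i := ⟨Or.inr d.adj, hd2⟩
  apply Set.eq_singleton_iff_unique_mem.mpr
  exact ⟨hmem, fun x hx' => hinv d.fst hd1 hx' hmem⟩

lemma card_grow {n : ℕ} (S : Set (Fin n)) (hS : S.Nonempty) (i : ℕ) :
    monitored (pathGraph n) S i = Set.univ ∨ i + 1 ≤ (monitored (pathGraph n) S i).ncard := by
  induction i with
  | zero =>
    right
    have : S ⊆ monitored (pathGraph n) S 0 := Set.subset_union_left
    have h1 : (monitored (pathGraph n) S 0).Nonempty := hS.mono this
    exact (Set.ncard_pos (Set.toFinite _)).mpr h1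
  | succ i ih =>
    rcases ih with h | h
    · left
      exact Set.eq_univ_of_subset (mono_monitored _ _ _) h
    · by_cases hu : monitored (pathGraph n) S i = Set.univ
      · left; exact Set.eq_univ_of_subset (mono_monitored _ _ _) hu
      · right
        have hne : (monitored (pathGraph n) S i).Nonempty := by
          rw [← Set.ncard_pos (Set.toFinite _)] at *
          omega
        obtain ⟨b, hb1, hb2⟩ := progress S i (inv_monitored S hS i) hne hu
        have : insert b (monitored (pathGraph n) S i) ⊆ monitored (pathGraph n) S (i+1) :=
          Set.insert_subset hb2 (mono_monitored _ _ _)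
        calc i + 1 + 1 ≤ (monitored (pathGraph n) S i).ncard + 1 := by omega
          _ = (insert b (monitored (pathGraph n) S i)).ncard :=
              (Set.ncard_insert_of_notMem hb1 (Set.toFinite _)).symm
          _ ≤ _ := Set.ncard_le_ncard this (Set.toFinite _)

lemma pds_of_nonempty {n : ℕ} (S : Set (Fin n)) (hS : S.Nonempty) :
    ∃ i, monitored (pathGraph n) S i = Set.univ := by
  refine ⟨n, ?_⟩
  rcases card_grow S hS n with h | h
  · exact h
  · exfalso
    have := Set.ncard_le_ncard (Set.subset_univ (monitored (pathGraph n) S n)) (Set.toFinite _)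
    rw [Set.ncard_univ] at this
    simp [Nat.card_eq_fintype_card] at this
    omega

theorem failedPowerDominationNumber_pathGraph (n : ℕ) (hn : 1 ≤ n) :
    failedPowerDominationNumber (SimpleGraph.pathGraph n) = 0 := by
  unfold failedPowerDominationNumber
  have hset : {k | ∃ S : Set (Fin n), ¬ IsPowerDominatingSet (pathGraph n) S ∧ S.ncard = k} = {0} := by
    ext k
    simp only [Set.mem_setOf_eq, Set.mem_singleton_iff]
    constructor
    · rintro ⟨S, hS, rfl⟩
      rcases Set.eq_empty_or_nonempty S with rfl | hne
      · simp
      · exact absurd (pds_of_nonempty S hne) hS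
    · rintro rfl
      refine ⟨∅, ?_, Set.ncard_empty _⟩
      rintro ⟨i, hi⟩
      have hemp : ∀ j, monitored (pathGraph n) (∅ : Set (Fin n)) j = ∅ := by
        intro j; induction j with
        | zero => simp [monitored, closedNbhdSet]
        | succ j ih => simp [monitored, ih]
      haveI : NeZero n := ⟨by omega⟩
      have h0 : (0 : Fin n) ∈ monitored (pathGraph n) (∅ : Set (Fin n)) i := by
        rw [hi]; trivial
      rw [hemp i] at h0
      exact h0
  rw [hset, csSup_singleton]
end

section
/- For every n ≥ 3, the cycle graph C_n on n vertices has failed power domination number γ̄_p(C_n) = 0; that is, every nonempty subset of vertices of C_n is a power dominating set. -/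
/-
In a cycle, a single vertex `v` monitors `v` and `v + 1` at once, and from then on the last
monitored vertex of the arc `v, v + 1, …, v + i + 1` has only one unmonitored neighbour, `v + i + 2`,
which it therefore forces. Once the arc has `n` vertices it is the whole cycle, so every nonempty
set is power dominating.
-/

open SimpleGraph

section Monitored

variable {V : Type*} {G : SimpleGraph V} {S : Set V} {i : ℕ}

lemma monitored_subset_succ : monitored G S i ⊆ monitored G S (i + 1) :=
  Set.subset_union_left

lemma mem_monitored_succ_of_neighborSet_subset {v w : V} (hv : v ∈ monitored G S i)
    (hw : w ∈ insert v (G.neighborSet v))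
    (hN : G.neighborSet v ⊆ insert w (monitored G S i)) :
    w ∈ monitored G S (i + 1) := by
  by_cases hwi : w ∈ monitored G S i
  · exact monitored_subset_succ hwi
  refine Or.inr ⟨v, hv, Set.eq_singleton_iff_unique_mem.2 ⟨⟨hw, hwi⟩, ?_⟩⟩
  rintro x ⟨rfl | hx, hxi⟩
  · exact absurd hv hxi
  · exact (hN hx).resolve_right hxi

lemma insert_neighborSet_subset_monitored_zero {v : V} (hv : v ∈ S) :
    insert v (G.neighborSet v) ⊆ monitored G S 0 := by
  rintro w (rfl | hw)
  exacts [Or.inl hv, Or.inr ⟨v, hv, hw⟩]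

end Monitored

section Circulant

variable {R : Type*} [AddCommGroupWithOne R]

lemma circulantGraph_one_neighborSet_subset (v : R) :
    (circulantGraph ({1} : Set R)).neighborSet v ⊆ {v - 1, v + 1} := by
  rintro w ⟨-, h | h⟩ <;> rw [Set.mem_singleton_iff] at h
  · exact Or.inl (show w = v - 1 by rw [← h]; abel)
  · exact Or.inr (show w = v + 1 by rw [← h]; abel)

lemma add_one_mem_insert_neighborSet_circulantGraph_one (v : R) :
    v + 1 ∈ insert v ((circulantGraph ({1} : Set R)).neighborSet v) := by
  by_cases h : v = v + 1
  · exact Or.inl h.symm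
  · exact Or.inr ⟨h, Or.inr (add_sub_cancel_left v 1)⟩

lemma add_natCast_mem_monitored_circulantGraph_one {S : Set R} {v : R} (hv : v ∈ S) :
    ∀ {i k : ℕ}, k ≤ i + 1 → v + k ∈ monitored (circulantGraph ({1} : Set R)) S i
  | 0, 0, _ => by simpa using insert_neighborSet_subset_monitored_zero hv (Set.mem_insert v _)
  | 0, 1, _ => by
    simpa using insert_neighborSet_subset_monitored_zero hv
      (add_one_mem_insert_neighborSet_circulantGraph_one v)
  | i + 1, k, hk => by
    obtain hk | rfl := Nat.lt_or_eq_of_le hk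
    · exact monitored_subset_succ (add_natCast_mem_monitored_circulantGraph_one hv (by omega))
    have hlast := add_natCast_mem_monitored_circulantGraph_one hv (le_refl (i + 1))
    have hprev := add_natCast_mem_monitored_circulantGraph_one hv (Nat.le_succ i)
    have hnext : v + ((i + 1 + 1 : ℕ) : R) = v + ((i + 1 : ℕ) : R) + 1 := by push_cast; abel
    rw [hnext]
    refine mem_monitored_succ_of_neighborSet_subset hlast
      (add_one_mem_insert_neighborSet_circulantGraph_one _) fun w hw => ?_
    obtain rfl | rfl := circulantGraph_one_neighborSet_subset _ hw
    · exact Or.inr (by convert hprev using 1; push_cast; abel)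
    · exact Or.inl rfl

end Circulant

open Fin.CommRing in
lemma isPowerDominatingSet_cycleGraph {n : ℕ} {S : Set (Fin n)} (hS : S.Nonempty) :
    IsPowerDominatingSet (cycleGraph n) S := by
  obtain ⟨v, hv⟩ := hS
  obtain ⟨m, rfl⟩ := Nat.exists_eq_add_one_of_ne_zero (Fin.pos v).ne'
  rw [cycleGraph_eq_circulantGraph]
  refine ⟨m, Set.eq_univ_of_forall fun w => ?_⟩
  have hw := add_natCast_mem_monitored_circulantGraph_one hv (Nat.le_succ_of_le (Fin.is_le (w - v)))
  rwa [Fin.cast_val_eq_self, add_sub_cancel] at hw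

lemma failedPowerDominationNumber_eq_zero_of_forall_nonempty {V : Type*} {G : SimpleGraph V}
    (h : ∀ S : Set V, S.Nonempty → IsPowerDominatingSet G S) :
    failedPowerDominationNumber G = 0 := by
  refine Nat.eq_zero_of_le_zero (csSup_le' ?_)
  rintro k ⟨S, hS, rfl⟩
  obtain rfl | hne := S.eq_empty_or_nonempty
  · exact Set.ncard_empty V |>.le
  · exact absurd (h S hne) hS

theorem failedPowerDominationNumber_cycleGraph_general (n : ℕ) :
    failedPowerDominationNumber (SimpleGraph.cycleGraph n) = 0 :=
  failedPowerDominationNumber_eq_zero_of_forall_nonempty fun _ => isPowerDominatingSet_cycleGraph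

theorem failedPowerDominationNumber_cycleGraph (n : ℕ) (hn : 3 ≤ n) :
    failedPowerDominationNumber (SimpleGraph.cycleGraph n) = 0 :=
  failedPowerDominationNumber_cycleGraph_general n
end

section
/- For every n ≥ 4, the wheel graph W_n on n vertices has failed power domination number γ̄_p(W_n) = 0; that is, every nonempty subset of vertices of W_n is a power dominating set. -/
/-- The join `G ∨ H` of two graphs: disjoint union plus all edges between the parts. -/
def joinGraph {α β : Type*} (G : SimpleGraph α) (H : SimpleGraph β) :
    SimpleGraph (α ⊕ β) where
  Adj x y :=
    match x, y with
    | Sum.inl a, Sum.inl b => G.Adj a b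
    | Sum.inr a, Sum.inr b => H.Adj a b
    | Sum.inl _, Sum.inr _ => True
    | Sum.inr _, Sum.inl _ => True
  symm := by
    constructor
    rintro (a | a) (b | b) h <;> simp_all [SimpleGraph.adj_comm]
  loopless := by
    constructor
    rintro (a | a) h
    · exact G.loopless.irrefl a h
    · exact H.loopless.irrefl a h

open SimpleGraph Sum
open scoped Fin.CommRing

section PowerDomination

variable {V : Type*} {G : SimpleGraph V} {S : Set V}

lemma monitored_mono_s11 : Monotone (monitored G S) :=
  monotone_nat_of_le_succ fun _ => Set.subset_union_left

lemma mem_monitored_zero_of_adj {u v : V} (hu : u ∈ S) (huv : G.Adj u v) :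
    v ∈ monitored G S 0 :=
  Or.inr ⟨u, hu, huv⟩

lemma mem_monitored_succ_of_forall_adj {i : ℕ} {v w : V} (hv : v ∈ monitored G S i)
    (hvw : G.Adj v w) (hothers : ∀ u, G.Adj v u → u ≠ w → u ∈ monitored G S i) :
    w ∈ monitored G S (i + 1) := by
  by_cases hw : w ∈ monitored G S i
  · exact Or.inl hw
  refine Or.inr ⟨v, hv, Set.eq_singleton_iff_unique_mem.2 ⟨⟨Or.inr hvw, hw⟩, ?_⟩⟩
  rintro u ⟨rfl | hvu, hu⟩
  · exact absurd hv hu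
  · by_contra huw
    exact hu (hothers u hvu huw)

lemma isPowerDominatingSet_of_forall_adj {v : V} (hv : v ∈ S)
    (hadj : ∀ w, w ≠ v → G.Adj v w) : IsPowerDominatingSet G S := by
  refine ⟨0, Set.eq_univ_of_forall fun w => ?_⟩
  by_cases hw : w = v
  · exact Or.inl (hw ▸ hv)
  · exact mem_monitored_zero_of_adj hv (hadj w hw)

lemma failedPowerDominationNumber_eq_zero
    (h : ∀ S : Set V, S.Nonempty → IsPowerDominatingSet G S) :
    failedPowerDominationNumber G = 0 := by
  refine Nat.le_zero.1 (csSup_le' fun m ⟨S, hS, hm⟩ => ?_)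
  rw [← hm, Set.not_nonempty_iff_eq_empty.1 (mt (h S) hS), Set.ncard_empty]

end PowerDomination

section Join

variable {α β : Type*} {G : SimpleGraph α} {H : SimpleGraph β}

lemma joinGraph_adj_inl_inr (a : α) (b : β) : (joinGraph G H).Adj (inl a) (inr b) := trivial

lemma joinGraph_adj_inr_inl (b : β) (a : α) : (joinGraph G H).Adj (inr b) (inl a) := trivial

lemma joinGraph_adj_inl_inl {a a' : α} : (joinGraph G H).Adj (inl a) (inl a') ↔ G.Adj a a' :=
  Iff.rfl

lemma isPowerDominatingSet_joinGraph_top_of_inr_mem {S : Set (α ⊕ β)} {b : β}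
    (hb : inr b ∈ S) : IsPowerDominatingSet (joinGraph G ⊤) S := by
  refine isPowerDominatingSet_of_forall_adj hb fun w hw => ?_
  rcases w with a | b'
  · exact joinGraph_adj_inr_inl b a
  · exact (top_adj b b').2 fun h => hw (congrArg inr h.symm)

end Join

section Wheel

variable {β : Type*} {H : SimpleGraph β} {k : ℕ} {S : Set (Fin (k + 2) ⊕ β)}

lemma inl_add_mem_monitored_joinGraph_cycleGraph {a : Fin (k + 2)} (ha : inl a ∈ S) (j : ℕ) :
    inl (a + j - 1) ∈ monitored (joinGraph (cycleGraph (k + 2)) H) S j ∧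
      inl (a + j) ∈ monitored (joinGraph (cycleGraph (k + 2)) H) S j := by
  induction j with
  | zero =>
    have hadj : (cycleGraph (k + 2)).Adj a (a - 1) := by
      rw [← mem_neighborSet, cycleGraph_neighborSet]; exact Or.inl rfl
    simpa using ⟨mem_monitored_zero_of_adj ha (joinGraph_adj_inl_inl.2 hadj), Or.inl ha⟩
  | succ j ih =>
    refine ⟨by simpa [← add_assoc] using monitored_mono_s11 j.le_succ ih.2, ?_⟩
    have hnext := mem_monitored_succ_of_forall_adj ih.2 (w := inl (a + j + 1)) ?_ ?_
    · simpa [add_assoc] using hnext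
    · rw [joinGraph_adj_inl_inl, ← mem_neighborSet, cycleGraph_neighborSet]; exact Or.inr rfl
    · rintro (c | b) hc hne
      · rw [joinGraph_adj_inl_inl, ← mem_neighborSet, cycleGraph_neighborSet] at hc
        rcases hc with rfl | rfl
        · exact ih.1
        · exact absurd rfl hne
      · exact monitored_mono_s11 j.zero_le (mem_monitored_zero_of_adj ha (joinGraph_adj_inl_inr a b))

lemma isPowerDominatingSet_joinGraph_cycleGraph_of_inl_mem {a : Fin (k + 2)} (ha : inl a ∈ S) :
    IsPowerDominatingSet (joinGraph (cycleGraph (k + 2)) H) S := by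
  refine ⟨k + 1, Set.eq_univ_of_forall fun w => ?_⟩
  rcases w with c | b
  · have hc : a + ((c - a).val : Fin (k + 2)) = c := by rw [Fin.cast_val_eq_self]; ring
    have hle : (c - a).val ≤ k + 1 := Nat.le_of_lt_succ (c - a).isLt
    have hmem := (inl_add_mem_monitored_joinGraph_cycleGraph (H := H) ha (c - a).val).2
    rw [hc] at hmem
    exact monitored_mono_s11 hle hmem
  · exact monitored_mono_s11 (k + 1).zero_le (mem_monitored_zero_of_adj ha (joinGraph_adj_inl_inr a b))

lemma isPowerDominatingSet_joinGraph_cycleGraph_top (hS : S.Nonempty) :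
    IsPowerDominatingSet (joinGraph (cycleGraph (k + 2)) (⊤ : SimpleGraph β)) S := by
  obtain ⟨a | b, h⟩ := hS
  · exact isPowerDominatingSet_joinGraph_cycleGraph_of_inl_mem h
  · exact isPowerDominatingSet_joinGraph_top_of_inr_mem h

end Wheel

theorem failedPowerDominationNumber_wheel (n : ℕ) (hn : 4 ≤ n) :
    failedPowerDominationNumber
      (joinGraph (SimpleGraph.cycleGraph (n - 1)) (⊤ : SimpleGraph (Fin 1))) = 0 := by
  obtain ⟨k, hk⟩ : ∃ k, n - 1 = k + 2 := ⟨n - 3, by omega⟩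
  rw [hk]
  exact failedPowerDominationNumber_eq_zero fun _ => isPowerDominatingSet_joinGraph_cycleGraph_top
end

section
/- For every n ≥ 4, the complement of the path P_n has failed power domination number γ̄_p(P̄_n) = 0; that is, every nonempty subset of vertices of the complement of P_n is a power dominating set. -/
lemma adjC {n : ℕ} {u v : Fin n} :
    (SimpleGraph.pathGraph n)ᶜ.Adj u v ↔
      u.val ≠ v.val ∧ u.val + 1 ≠ v.val ∧ v.val + 1 ≠ u.val := by
  rw [SimpleGraph.compl_adj, SimpleGraph.pathGraph_adj, Fin.ne_iff_vne]
  tauto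

lemma step_mem {V : Type*} (G : SimpleGraph V) (S : Set V) (i : ℕ) {u w : V}
    (hu : u ∈ monitored G S i) (hw : w ∉ monitored G S i) (ha : G.Adj u w)
    (hall : ∀ x, G.Adj u x → x ∉ monitored G S i → x = w) :
    w ∈ monitored G S (i + 1) := by
  refine Set.mem_union_right _ ⟨u, hu, ?_⟩
  ext x
  simp only [Set.mem_diff, Set.mem_insert_iff, SimpleGraph.mem_neighborSet,
    Set.mem_singleton_iff]
  constructor
  · rintro ⟨(rfl | hx), hnx⟩
    · exact absurd hu hnx
    · exact hall x hx hnx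
  · rintro rfl; exact ⟨Or.inr ha, hw⟩

lemma mono_step {V : Type*} (G : SimpleGraph V) (S : Set V) (i : ℕ) :
    monitored G S i ⊆ monitored G S (i + 1) :=
  Set.subset_union_left

lemma nonempty_isPDS {n : ℕ} (hn : 4 ≤ n) (S : Set (Fin n)) (hS : S.Nonempty) :
    IsPowerDominatingSet (SimpleGraph.pathGraph n)ᶜ S := by
  set G := (SimpleGraph.pathGraph n)ᶜ with hG
  obtain ⟨v, hv⟩ := hS
  -- P0 contains N[v]
  have hP0 : ∀ w : Fin n, w = v ∨ G.Adj v w → w ∈ monitored G S 0 := by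
    rintro w (rfl | hw)
    · exact Set.mem_union_left _ hv
    · exact Set.mem_union_right _ ⟨v, hv, hw⟩
  have hmiss0 : ∀ w : Fin n, w ∉ monitored G S 0 →
      w.val + 1 = v.val ∨ v.val + 1 = w.val := by
    intro w hw
    by_contra hc
    push_neg at hc
    rcases eq_or_ne w v with rfl | hne
    · exact hw (hP0 w (Or.inl rfl))
    · exact hw (hP0 w (Or.inr (adjC.2 ⟨by
        simpa [Fin.ne_iff_vne, eq_comm] using hne.symm, by omega, by omega⟩)))
  -- after one step, the complement of P1 is contained in a single point {z}
  have key : ∃ z : Fin n, ∀ x : Fin n, x ∉ monitored G S 1 → x = z := by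
    by_cases hcase : v.val + 2 < n
    · refine ⟨⟨v.val + 1, by omega⟩, ?_⟩
      intro x hx
      have hx0 : x ∉ monitored G S 0 := fun h => hx (mono_step G S 0 h)
      rcases hmiss0 x hx0 with h1 | h2
      · -- x = v-1 : gets forced by u = v+2
        exfalso
        set u : Fin n := ⟨v.val + 2, hcase⟩ with hu
        have huP : u ∈ monitored G S 0 :=
          hP0 u (Or.inr (adjC.2 ⟨by simp [hu], by simp [hu], by simp [hu]; omega⟩))
        have hadj : G.Adj u x := adjC.2 ⟨by simp [hu]; omega, by simp [hu]; omega,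
          by simp [hu]; omega⟩
        refine hx (step_mem G S 0 huP hx0 hadj ?_)
        intro y hy hy0
        have := hmiss0 y hy0
        have hyu := adjC.1 hy
        apply Fin.ext
        simp [hu] at hyu
        omega
      · exact Fin.ext (by simpa using h2.symm)
    · -- v.val + 2 ≥ n, so v.val ≥ 2 since v.val < n and 4 ≤ n
      have hv2 : 2 ≤ v.val := by have := v.isLt; omega
      refine ⟨⟨v.val - 1, by have := v.isLt; omega⟩, ?_⟩
      intro x hx
      have hx0 : x ∉ monitored G S 0 := fun h => hx (mono_step G S 0 h)
      rcases hmiss0 x hx0 with h1 | h2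
      · exact Fin.ext (by simp; omega)
      · -- x = v+1 : gets forced by u = v-2
        exfalso
        set u : Fin n := ⟨v.val - 2, by have := v.isLt; omega⟩ with hu
        have huP : u ∈ monitored G S 0 :=
          hP0 u (Or.inr (adjC.2 ⟨by simp [hu]; omega, by simp [hu]; omega,
            by simp [hu]; omega⟩))
        have hadj : G.Adj u x := adjC.2 ⟨by simp [hu]; omega, by simp [hu]; omega,
          by simp [hu]; omega⟩
        refine hx (step_mem G S 0 huP hx0 hadj ?_)
        intro y hy hy0
        have := hmiss0 y hy0
        have hyu := adjC.1 hy
        apply Fin.ext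
        simp [hu] at hyu
        omega
  obtain ⟨z, hz⟩ := key
  refine ⟨2, ?_⟩
  by_cases hzP : z ∈ monitored G S 1
  · -- monitored 1 is already everything
    have : monitored G S 1 = Set.univ := by
      ext x; simp only [Set.mem_univ, iff_true]
      by_contra hx
      exact hx (by rwa [hz x hx])
    rw [show (2 : ℕ) = 1 + 1 from rfl]
    exact Set.eq_univ_of_univ_subset (this ▸ mono_step G S 1)
  · -- force z using some u ∈ P1 adjacent to z
    have hu : ∃ u : Fin n, u.val ≠ z.val ∧ u.val + 1 ≠ z.val ∧ z.val + 1 ≠ u.val := by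
      by_cases h : z.val + 2 < n
      · exact ⟨⟨z.val + 2, h⟩, by simp only [Fin.val_mk]; omega, by simp only [Fin.val_mk]; omega, by simp only [Fin.val_mk]; omega⟩
      · have : 2 ≤ z.val := by have := z.isLt; omega
        exact ⟨⟨z.val - 2, by have := z.isLt; omega⟩, by simp only [Fin.val_mk]; omega,
          by simp only [Fin.val_mk]; omega, by simp only [Fin.val_mk]; omega⟩
    obtain ⟨u, h1, h2, h3⟩ := hu
    have huP : u ∈ monitored G S 1 := by
      by_contra hc
      exact h1 (congrArg Fin.val (hz u hc))
    have hadj : G.Adj u z := adjC.2 ⟨h1, h2, h3⟩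
    have hzmem : z ∈ monitored G S 2 :=
      step_mem G S 1 huP hzP hadj (fun x _ hx0 => hz x hx0)
    ext x
    simp only [Set.mem_univ, iff_true]
    by_cases hx : x ∈ monitored G S 1
    · exact mono_step G S 1 hx
    · exact (hz x hx) ▸ hzmem

lemma empty_not_PDS {n : ℕ} (hn : 4 ≤ n) :
    ¬ IsPowerDominatingSet (SimpleGraph.pathGraph n)ᶜ (∅ : Set (Fin n)) := by
  rintro ⟨i, hi⟩
  have hempty : ∀ j, monitored (SimpleGraph.pathGraph n)ᶜ (∅ : Set (Fin n)) j = ∅ := by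
    intro j
    induction j with
    | zero => simp [monitored, closedNbhdSet]
    | succ k ih => simp [monitored, ih]
  have : (⟨0, by omega⟩ : Fin n) ∈ (∅ : Set (Fin n)) := by
    rw [← hempty i, hi]; trivial
  exact this

theorem failedPowerDominationNumber_compl_pathGraph (n : ℕ) (hn : 4 ≤ n) :
    failedPowerDominationNumber (SimpleGraph.pathGraph n)ᶜ = 0 := by
  have hset : {k | ∃ S : Set (Fin n),
      ¬ IsPowerDominatingSet (SimpleGraph.pathGraph n)ᶜ S ∧ S.ncard = k} = {0} := by
    ext k
    simp only [Set.mem_setOf_eq, Set.mem_singleton_iff]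
    constructor
    · rintro ⟨S, hS, rfl⟩
      rcases S.eq_empty_or_nonempty with rfl | hne
      · simp
      · exact absurd (nonempty_isPDS hn S hne) hS
    · rintro rfl
      exact ⟨∅, empty_not_PDS hn, by simp⟩
  rw [failedPowerDominationNumber, hset, csSup_singleton]
end

section
/- Let G be a finite simple graph with γ̄_p(G) = 0. If G has a vertex of degree one or a cut-vertex, then G is isomorphic to a path P_n for some n ≥ 1. -/
/-- If the failed power domination number is zero, every nonempty set is a PDS. -/
lemma FPD.lemA {V : Type*} [Fintype V] (G : SimpleGraph V)
    (h0 : failedPowerDominationNumber G = 0) :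
    ∀ S : Set V, S.Nonempty → IsPowerDominatingSet G S := by
  intro S hS
  by_contra hnp
  have hmem : S.ncard ∈ {k | ∃ S : Set V, ¬ IsPowerDominatingSet G S ∧ S.ncard = k} :=
    ⟨S, hnp, rfl⟩
  have hbdd : BddAbove {k | ∃ S : Set V, ¬ IsPowerDominatingSet G S ∧ S.ncard = k} := by
    refine ⟨Fintype.card V, ?_⟩
    rintro k ⟨S', -, rfl⟩
    calc S'.ncard ≤ (Set.univ : Set V).ncard := Set.ncard_le_ncard (Set.subset_univ _)
    _ = Fintype.card V := by rw [Set.ncard_univ, Nat.card_eq_fintype_card]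
  have := le_csSup hbdd hmem
  rw [show sSup {k | ∃ S : Set V, ¬ IsPowerDominatingSet G S ∧ S.ncard = k}
      = failedPowerDominationNumber G from rfl, h0, Nat.le_zero] at this
  exact hS.ne_empty ((Set.ncard_eq_zero S.toFinite).mp this)

/-- A nonempty fort that avoids the closed neighborhood of `s` witnesses that
`{s}` is not a power dominating set. -/
lemma FPD.lemB {V : Type*} (G : SimpleGraph V) (T : Set V) (hT : T.Nonempty)
    (fort : ∀ x ∉ T, ∀ t ∈ T, G.Adj x t → ∃ t' ∈ T, t' ≠ t ∧ G.Adj x t')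
    (s : V) (hs : s ∉ T) (hsN : ∀ t ∈ T, ¬ G.Adj s t) :
    ¬ IsPowerDominatingSet G {s} := by
  have key : ∀ i, ∀ t ∈ T, t ∉ monitored G {s} i := by
    intro i
    induction i with
    | zero =>
      intro t ht hmem
      rcases hmem with h1 | h2
      · exact hs (Set.mem_singleton_iff.mp h1 ▸ ht)
      · rcases h2 with ⟨u, hu, hadj⟩
        rw [Set.mem_singleton_iff] at hu
        exact hsN t ht (hu ▸ hadj)
    | succ i ih =>
      intro t ht hmem
      rcases hmem with h1 | h2
      · exact ih t ht h1
      · rcases h2 with ⟨v, hv, hset⟩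
        have hvT : v ∉ T := fun hvT => ih v hvT hv
        have htmem : t ∈ insert v (G.neighborSet v) \ monitored G {s} i := by
          rw [hset]; rfl
        have hadj : G.Adj v t := by
          rcases htmem.1 with h | h
          · exact absurd (h ▸ ht) hvT
          · exact h
        rcases fort v hvT t ht hadj with ⟨t', ht', hne, hadj'⟩
        have : t' ∈ insert v (G.neighborSet v) \ monitored G {s} i :=
          ⟨Set.mem_insert_of_mem _ hadj', ih t' ht'⟩
        rw [hset, Set.mem_singleton_iff] at this
        exact hne this
  rintro ⟨i, hi⟩
  rcases hT with ⟨t, ht⟩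
  exact key i t ht (hi ▸ Set.mem_univ t)

/-- The chain lemma: starting from a vertex `x0` with a unique neighbor `x1` inside
a "closed" region `W`, the region `W` must be a path `x1, …, x k` hanging off of `x0`. -/
lemma FPD.chain {V : Type*} [Fintype V] (G : SimpleGraph V)
    (hAll : ∀ S : Set V, S.Nonempty → IsPowerDominatingSet G S)
    (W : Set V) (x0 x1 s : V)
    (hx0W : x0 ∉ W) (hsW : s ∉ W) (hx1W : x1 ∈ W)
    (hadj01 : G.Adj x0 x1)
    (hx0nbr : ∀ w ∈ W, G.Adj x0 w → w = x1)
    (hWclosed : ∀ w ∈ W, ∀ b, G.Adj w b → b ∈ W ∨ b = x0)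
    (hs : ∀ t ∈ W, G.Adj s t → t = x1) :
    ∃ k, 1 ≤ k ∧ ∃ x : ℕ → V, x 0 = x0 ∧ x 1 = x1 ∧
      (∀ i j, i ≤ k → j ≤ k → x i = x j → i = j) ∧
      (∀ w ∈ W, ∃ i, 1 ≤ i ∧ i ≤ k ∧ x i = w) ∧
      (∀ i, 1 ≤ i → i ≤ k → x i ∈ W) ∧
      (∀ i, i < k → G.Adj (x i) (x (i+1))) ∧
      (∀ i, 1 ≤ i → i ≤ k → ∀ w, G.Adj (x i) w →
        w = x (i-1) ∨ (i < k ∧ w = x (i+1))) := by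
  -- the target predicate
  set Goal : Prop := ∃ k, 1 ≤ k ∧ ∃ x : ℕ → V, x 0 = x0 ∧ x 1 = x1 ∧
      (∀ i j, i ≤ k → j ≤ k → x i = x j → i = j) ∧
      (∀ w ∈ W, ∃ i, 1 ≤ i ∧ i ≤ k ∧ x i = w) ∧
      (∀ i, 1 ≤ i → i ≤ k → x i ∈ W) ∧
      (∀ i, i < k → G.Adj (x i) (x (i+1))) ∧
      (∀ i, 1 ≤ i → i ≤ k → ∀ w, G.Adj (x i) w →
        w = x (i-1) ∨ (i < k ∧ w = x (i+1))) with hGoal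
  -- the finishing step when the remainder is empty
  have final : ∀ (k : ℕ) (x : ℕ → V), 1 ≤ k → x 0 = x0 → x 1 = x1 →
      (∀ i j, i ≤ k → j ≤ k → x i = x j → i = j) →
      (∀ i, 1 ≤ i → i ≤ k → x i ∈ W) →
      (∀ i, i < k → G.Adj (x i) (x (i+1))) →
      (∀ i, 1 ≤ i → i < k → ∀ w, G.Adj (x i) w → w = x (i-1) ∨ w = x (i+1)) →
      {w ∈ W | ∀ i ≤ k, x i ≠ w} = ∅ → Goal := by
    intro k x hk h0 h1 hinj hmem hadj hnbr hT
    have hcover : ∀ w ∈ W, ∃ i, 1 ≤ i ∧ i ≤ k ∧ x i = w := by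
      intro w hw
      by_contra hc
      push_neg at hc
      have : w ∈ {w ∈ W | ∀ i ≤ k, x i ≠ w} := by
        refine ⟨hw, fun i hi hxi => ?_⟩
        rcases Nat.eq_zero_or_pos i with rfl | hipos
        · exact hx0W (h0 ▸ hxi ▸ hw)
        · exact hc i hipos hi hxi
      rw [hT] at this; exact this
    refine ⟨k, hk, x, h0, h1, hinj, hcover, hmem, hadj, ?_⟩
    intro i h1i hik w hadjw
    rcases Nat.lt_or_ge i k with hik' | hik'
    · rcases hnbr i h1i hik' w hadjw with h | h
      · exact Or.inl h
      · exact Or.inr ⟨hik', h⟩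
    · have hieq : i = k := le_antisymm hik hik'
      subst hieq
      left
      have hxkW : x i ∈ W := hmem i h1i le_rfl
      rcases hWclosed _ hxkW w hadjw with hwW | hwx0
      · rcases hcover w hwW with ⟨j, h1j, hjk, rfl⟩
        rcases Nat.lt_or_ge j i with hji | hji
        · rcases hnbr j h1j (by omega) (x i) hadjw.symm with h | h
          · have := hinj i (j-1) le_rfl (by omega) h
            omega
          · have := hinj i (j+1) le_rfl (by omega) h
            have hji1 : j = i - 1 := by omega
            rw [hji1]
        · rcases Nat.eq_or_lt_of_le hji with rfl | hji'
          · exact absurd hadjw G.irrefl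
          · omega
      · subst hwx0
        have : x i = x1 := hx0nbr _ hxkW hadjw.symm
        have := hinj i 1 le_rfl hk (this.trans h1.symm)
        subst this
        rw [← h0]
  -- main induction on the size of the remainder
  have aux : ∀ (m k : ℕ) (x : ℕ → V), 1 ≤ k → x 0 = x0 → x 1 = x1 →
      (∀ i j, i ≤ k → j ≤ k → x i = x j → i = j) →
      (∀ i, 1 ≤ i → i ≤ k → x i ∈ W) →
      (∀ i, i < k → G.Adj (x i) (x (i+1))) →
      (∀ i, 1 ≤ i → i < k → ∀ w, G.Adj (x i) w → w = x (i-1) ∨ w = x (i+1)) →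
      {w ∈ W | ∀ i ≤ k, x i ≠ w}.ncard ≤ m → Goal := by
    intro m
    induction m with
    | zero =>
      intro k x hk h0 h1 hinj hmem hadj hnbr hcard
      refine final k x hk h0 h1 hinj hmem hadj hnbr ?_
      exact (Set.ncard_eq_zero (Set.toFinite _)).mp (Nat.le_zero.mp hcard)
    | succ m ih =>
      intro k x hk h0 h1 hinj hmem hadj hnbr hcard
      set T : Set V := {w ∈ W | ∀ i ≤ k, x i ≠ w} with hTdef
      rcases Set.eq_empty_or_nonempty T with hT | hTne
      · exact final k x hk h0 h1 hinj hmem hadj hnbr hT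
      -- the last vertex must have a unique neighbor in T
      have hxkW : x k ∈ W := hmem k hk le_rfl
      by_cases hEx : ∃ t ∈ T, G.Adj (x k) t ∧ ∀ t' ∈ T, G.Adj (x k) t' → t' = t
      · rcases hEx with ⟨xn, hxnT, hxnadj, huniq⟩
        set x' : ℕ → V := Function.update x (k+1) xn with hx'def
        have hx'eq : ∀ i, i ≤ k → x' i = x i := fun i hi =>
          Function.update_of_ne (by omega) _ _
        have hx'last : x' (k+1) = xn := Function.update_self _ _ _
        have hxnW : xn ∈ W := hxnT.1
        have hxnnot : ∀ i, i ≤ k → x i ≠ xn := hxnT.2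
        -- the new nbhd fact for x k
        have hnbrk : ∀ w, G.Adj (x k) w → w = x (k-1) ∨ w = xn := by
          intro w hadjw
          rcases hWclosed _ hxkW w hadjw with hwW | hwx0
          · by_cases hwT : w ∈ T
            · exact Or.inr (huniq w hwT hadjw)
            · have : ∃ j, j ≤ k ∧ x j = w := by
                by_contra hc
                push_neg at hc
                exact hwT ⟨hwW, fun i hi => hc i hi⟩
              rcases this with ⟨j, hjk, rfl⟩
              have h1j : 1 ≤ j := by
                rcases Nat.eq_zero_or_pos j with rfl | h
                · exact absurd (h0 ▸ hwW) hx0W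
                · exact h
              rcases Nat.eq_or_lt_of_le hjk with rfl | hjk'
              · exact absurd hadjw G.irrefl
              · rcases hnbr j h1j hjk' (x k) hadjw.symm with h | h
                · have := hinj k (j-1) le_rfl (by omega) h
                  omega
                · have := hinj k (j+1) le_rfl (by omega) h
                  left
                  have : k = j + 1 := hinj k (j+1) le_rfl (by omega) h
                  congr 1
                  omega
          · subst hwx0
            have : x k = x1 := hx0nbr _ hxkW hadjw.symm
            have hk1 : k = 1 := hinj k 1 le_rfl hk (this.trans h1.symm)
            subst hk1
            left
            rw [← h0]
        refine ih (k+1) x' (by omega) ?_ ?_ ?_ ?_ ?_ ?_ ?_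
        · rw [hx'eq 0 (by omega), h0]
        · rw [hx'eq 1 hk, h1]
        · intro i j hi hj hxx
          rcases Nat.lt_or_ge i (k+1) with hi' | hi' <;>
            rcases Nat.lt_or_ge j (k+1) with hj' | hj'
          · exact hinj i j (by omega) (by omega)
              (by rwa [hx'eq i (by omega), hx'eq j (by omega)] at hxx)
          · have hjeq : j = k + 1 := by omega
            subst hjeq
            rw [hx'eq i (by omega), hx'last] at hxx
            exact absurd hxx (hxnnot i (by omega))
          · have hieq : i = k + 1 := by omega
            subst hieq
            rw [hx'eq j (by omega), hx'last] at hxx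
            exact absurd hxx.symm (hxnnot j (by omega))
          · omega
        · intro i h1i hik
          rcases Nat.lt_or_ge i (k+1) with hi' | hi'
          · rw [hx'eq i (by omega)]; exact hmem i h1i (by omega)
          · have : i = k + 1 := by omega
            subst this
            rw [hx'last]; exact hxnW
        · intro i hik
          rcases Nat.lt_or_ge i k with hi' | hi'
          · rw [hx'eq i (by omega), hx'eq (i+1) (by omega)]
            exact hadj i hi'
          · have : i = k := by omega
            subst this
            rw [hx'eq i (by omega), hx'last]
            exact hxnadj
        · intro i h1i hik w hadjw
          rcases Nat.lt_or_ge i k with hi' | hi'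
          · rw [hx'eq i (by omega)] at hadjw
            rcases hnbr i h1i hi' w hadjw with h | h
            · rw [hx'eq (i-1) (by omega)]; exact Or.inl h
            · rw [hx'eq (i+1) (by omega)]; exact Or.inr h
          · have : i = k := by omega
            subst this
            rw [hx'eq i (by omega)] at hadjw
            rcases hnbrk w hadjw with h | h
            · rw [hx'eq (i-1) (by omega)]; exact Or.inl h
            · rw [hx'last]; exact Or.inr h
        · have hset : {w ∈ W | ∀ i ≤ k+1, x' i ≠ w} = T \ {xn} := by
            ext w
            constructor
            · rintro ⟨hwW, hw⟩
              refine ⟨⟨hwW, fun i hi => by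
                have := hw i (by omega)
                rwa [hx'eq i hi] at this⟩, ?_⟩
              intro hwxn
              rw [Set.mem_singleton_iff] at hwxn
              exact hw (k+1) le_rfl (hx'last.trans hwxn.symm)
            · rintro ⟨⟨hwW, hw⟩, hwxn⟩
              refine ⟨hwW, fun i hi => ?_⟩
              rcases Nat.lt_or_ge i (k+1) with hi' | hi'
              · rw [hx'eq i (by omega)]; exact hw i (by omega)
              · have : i = k + 1 := by omega
                subst this
                rw [hx'last]
                exact fun h => hwxn (h ▸ rfl)
          rw [hset]
          have := Set.ncard_diff_singleton_lt_of_mem hxnT (Set.toFinite _)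
          omega
      · -- no unique neighbor: T is a fort avoided by N[s], contradiction
        exfalso
        push_neg at hEx
        have fort : ∀ y ∉ T, ∀ t ∈ T, G.Adj y t → ∃ t' ∈ T, t' ≠ t ∧ G.Adj y t' := by
          intro y hyT t htT hadjt
          have htW : t ∈ W := htT.1
          rcases hWclosed t htW y hadjt.symm with hyW | hyx0
          · have : ∃ j, j ≤ k ∧ x j = y := by
              by_contra hc
              push_neg at hc
              exact hyT ⟨hyW, fun i hi => hc i hi⟩
            rcases this with ⟨j, hjk, rfl⟩
            have h1j : 1 ≤ j := by
              rcases Nat.eq_zero_or_pos j with rfl | h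
              · exact absurd (h0 ▸ hyW) hx0W
              · exact h
            rcases Nat.eq_or_lt_of_le hjk with rfl | hjk'
            · rcases hEx t htT hadjt with ⟨t', ht', hadj', hne⟩
              exact ⟨t', ht', hne, hadj'⟩
            · exfalso
              rcases hnbr j h1j hjk' t hadjt with h | h
              · exact htT.2 (j-1) (by omega) h.symm
              · exact htT.2 (j+1) (by omega) h.symm
          · subst hyx0
            exfalso
            have := hx0nbr t htW hadjt
            exact htT.2 1 hk (h1.trans this.symm)
        have hsT : s ∉ T := fun h => hsW h.1
        have hsN : ∀ t ∈ T, ¬ G.Adj s t := by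
          intro t htT hadjt
          exact htT.2 1 hk (h1.trans (hs t htT.1 hadjt).symm)
        exact FPD.lemB G T hTne fort s hsT hsN (hAll {s} ⟨s, rfl⟩)
  -- start the chain with x0, x1
  set xinit : ℕ → V := fun i => if i = 0 then x0 else x1 with hxinit
  refine aux {w ∈ W | ∀ i ≤ 1, xinit i ≠ w}.ncard 1 xinit le_rfl rfl rfl ?_ ?_ ?_ ?_ le_rfl
  · intro i j hi hj hxx
    have hne : x0 ≠ x1 := hadj01.ne
    simp only [hxinit] at hxx
    interval_cases i <;> interval_cases j
    · rfl
    · norm_num at hxx; exact absurd hxx hne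
    · norm_num at hxx; exact absurd hxx.symm hne
    · rfl
  · intro i h1i hi1
    have : i = 1 := by omega
    subst this
    simpa [hxinit] using hx1W
  · intro i hi
    have : i = 0 := by omega
    subst this
    simpa [hxinit] using hadj01
  · intro i h1i hi1
    omega

/-- A cut vertex in a graph whose failed power domination number is zero
forces the existence of a degree-one vertex. -/
lemma FPD.deg1_of_cut {V : Type*} [Fintype V] (G : SimpleGraph V)
    (hAll : ∀ S : Set V, S.Nonempty → IsPowerDominatingSet G S)
    (c : V)
    (hc : Nat.card G.ConnectedComponent <
      Nat.card (G.induce ({c}ᶜ : Set V)).ConnectedComponent) :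
    ∃ v u : V, G.Adj v u ∧ ∀ w, G.Adj v w → w = u := by
  -- extract two non-reachable vertices in the punctured graph
  have hLHS : 1 ≤ Nat.card G.ConnectedComponent := by
    have : Nonempty G.ConnectedComponent := ⟨G.connectedComponentMk c⟩
    exact Nat.card_pos
  have hRHS : 2 ≤ Nat.card (G.induce ({c}ᶜ : Set V)).ConnectedComponent := by omega
  have hne : Nonempty (G.induce ({c}ᶜ : Set V)).ConnectedComponent := by
    have : 0 < Nat.card (G.induce ({c}ᶜ : Set V)).ConnectedComponent := by omega
    exact (Nat.card_pos_iff.mp this).1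
  obtain ⟨cc⟩ := hne
  obtain ⟨a, -⟩ := cc.exists_rep
  have hnotpre : ∃ b : ({c}ᶜ : Set V), ¬ (G.induce ({c}ᶜ : Set V)).Reachable a b := by
    by_contra hcon
    push_neg at hcon
    have hpre : (G.induce ({c}ᶜ : Set V)).Preconnected := fun u v =>
      (hcon u).symm.trans (hcon v)
    have := hpre.subsingleton_connectedComponent
    have := Nat.card_of_subsingleton
      ((G.induce ({c}ᶜ : Set V)).connectedComponentMk a)
    omega
  obtain ⟨b, hab⟩ := hnotpre
  -- the component of `a` in the punctured graph
  set A : Set V := {w | ∃ h : w ∈ ({c}ᶜ : Set V),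
    (G.induce ({c}ᶜ : Set V)).Reachable ⟨w, h⟩ a} with hA
  have haA : (a : V) ∈ A := ⟨a.2, by rw [Subtype.coe_eta]⟩
  have hbA : (b : V) ∉ A := by
    rintro ⟨hb', hreach⟩
    rw [Subtype.coe_eta] at hreach
    exact hab hreach.symm
  have hcA : c ∉ A := by
    rintro ⟨hc', -⟩
    exact hc' rfl
  have hbc : (b : V) ≠ c := b.2
  -- A is closed under adjacency away from c
  have hAclosed : ∀ w ∈ A, ∀ y, G.Adj w y → y ∈ A ∨ y = c := by
    rintro w ⟨hw', hwreach⟩ y hadj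
    by_cases hyc : y = c
    · exact Or.inr hyc
    · left
      have hy' : y ∈ ({c}ᶜ : Set V) := hyc
      have hadj' : (G.induce ({c}ᶜ : Set V)).Adj ⟨y, hy'⟩ ⟨w, hw'⟩ := hadj.symm
      exact ⟨hy', hadj'.reachable.trans hwreach⟩
  -- c has a unique neighbor in A
  have hb_nadj : ∀ t ∈ A, ¬ G.Adj (b : V) t := by
    intro t htA hadj
    rcases hAclosed t htA b hadj.symm with h | h
    · exact hbA h
    · exact hbc h
  by_cases hEx : ∃ t ∈ A, G.Adj c t ∧ ∀ t' ∈ A, G.Adj c t' → t' = t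
  · obtain ⟨x1, hx1A, hcx1, huniq⟩ := hEx
    obtain ⟨k, hk, x, h0, h1, hinj, hcover, hmem, hadjx, hnbrx⟩ :=
      FPD.chain G hAll A c x1 b hcA hbA hx1A hcx1
        (fun w hw hadj => huniq w hw hadj) hAclosed
        (fun t ht hadj => absurd hadj (hb_nadj t ht))
    refine ⟨x k, x (k-1), ?_, ?_⟩
    · have := hadjx (k-1) (by omega)
      have hkk : k - 1 + 1 = k := by omega
      rw [hkk] at this
      exact this.symm
    · intro w hadj
      rcases hnbrx k hk le_rfl w hadj with h | ⟨h, -⟩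
      · exact h
      · omega
  · exfalso
    push_neg at hEx
    have fort : ∀ y ∉ A, ∀ t ∈ A, G.Adj y t → ∃ t' ∈ A, t' ≠ t ∧ G.Adj y t' := by
      intro y hyA t htA hadj
      rcases hAclosed t htA y hadj.symm with h | h
      · exact absurd h hyA
      · subst h
        obtain ⟨t', ht', hadj', hne⟩ := hEx t htA hadj
        exact ⟨t', ht', hne, hadj'⟩
    exact FPD.lemB G A ⟨a, haA⟩ fort b hbA hb_nadj (hAll {(b : V)} ⟨b, rfl⟩)

theorem path_of_failedPowerDominationNumber_eq_zero_of_degree_one_or_cutVertex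
    {V : Type*} [Fintype V] (G : SimpleGraph V)
    (h0 : failedPowerDominationNumber G = 0)
    (h : (∃ v : V, ∃! u : V, G.Adj v u) ∨
      (∃ v : V, Nat.card G.ConnectedComponent <
        Nat.card (G.induce ({v}ᶜ : Set V)).ConnectedComponent)) :
    ∃ n : ℕ, 1 ≤ n ∧ Nonempty (G ≃g SimpleGraph.pathGraph n) := by
  have hAll := FPD.lemA G h0
  -- reduce to the existence of a degree-one vertex
  have hdeg1 : ∃ v u : V, G.Adj v u ∧ ∀ w, G.Adj v w → w = u := by
    rcases h with ⟨v, u, hu, huniq⟩ | ⟨c, hc⟩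
    · exact ⟨v, u, hu, fun w hw => huniq w hw⟩
    · exact FPD.deg1_of_cut G hAll c hc
  obtain ⟨v, u, hadjvu, huniq⟩ := hdeg1
  -- run the chain lemma on the whole graph minus `v`
  have huv : u ∈ ({v}ᶜ : Set V) := hadjvu.ne'
  obtain ⟨k, hk, x, h0x, h1x, hinj, hcover, hmem, hadjx, hnbrx⟩ :=
    FPD.chain G hAll ({v}ᶜ : Set V) v u v (by simp) (by simp) huv hadjvu
      (fun w _ hadj => huniq w hadj)
      (fun w _ b _ => by
        by_cases hb : b = v
        · exact Or.inr hb
        · exact Or.inl hb)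
      (fun t _ hadj => huniq t hadj)
  -- build the isomorphism with the path graph on k+1 vertices
  refine ⟨k + 1, by omega, ?_⟩
  have hvals : ∀ i : Fin (k+1), (i : ℕ) ≤ k := fun i => by omega
  set f : Fin (k+1) → V := fun i => x i with hf
  have hfinj : Function.Injective f := by
    intro i j hij
    exact Fin.ext (hinj i j (hvals i) (hvals j) hij)
  have hfsurj : Function.Surjective f := by
    intro w
    by_cases hw : w = v
    · exact ⟨⟨0, by omega⟩, by simp [hf, h0x, hw]⟩
    · obtain ⟨i, h1i, hik, hxi⟩ := hcover w hw
      exact ⟨⟨i, by omega⟩, hxi⟩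
  have hbij : Function.Bijective f := ⟨hfinj, hfsurj⟩
  set e : Fin (k+1) ≃ V := Equiv.ofBijective f hbij with he
  have hiff : ∀ i j : Fin (k+1), G.Adj (f i) (f j) ↔
      ((i : ℕ) + 1 = (j : ℕ) ∨ (j : ℕ) + 1 = (i : ℕ)) := by
    intro i j
    constructor
    · intro hadj
      rcases Nat.eq_zero_or_pos (i : ℕ) with hi0 | hipos
      · left
        have : f i = v := by rw [hf]; simp only [hi0]; exact h0x
        rw [this] at hadj
        have : f j = x 1 := (huniq _ hadj).trans h1x.symm
        have := hinj j 1 (hvals j) hk this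
        omega
      · rcases hnbrx (i : ℕ) hipos (hvals i) (f j) hadj with hh | ⟨hik, hh⟩
        · right
          have := hinj j ((i : ℕ) - 1) (hvals j) (by omega) hh
          omega
        · left
          have := hinj j ((i : ℕ) + 1) (hvals j) (by omega) hh
          omega
    · rintro (hij | hij)
      · have := hadjx (i : ℕ) (by omega)
        rw [hij] at this
        exact this
      · have := hadjx (j : ℕ) (by omega)
        rw [hij] at this
        exact this.symm
  refine ⟨SimpleGraph.Iso.symm ⟨e, ?_⟩⟩
  intro i j
  rw [SimpleGraph.pathGraph_adj]
  exact (hiff i j).trans (Iff.symm (by tauto))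
end

section
/- Let m ≥ n ≥ 1. The complete bipartite graph K_{m,n} satisfies γ̄_p(K_{m,n}) = m − 2 if m ≥ 2, and γ̄_p(K_{m,n}) = 0 if m = 1 (i.e., K_{1,1}). -/
set_option linter.unnecessarySimpa false

section helpers

variable {m n : ℕ}

local notation "G" => completeBipartiteGraph (Fin m) (Fin n)
local notation "VV" => (Fin m ⊕ Fin n)

lemma helperA {S : Set VV} (ha : ∃ a, Sum.inl a ∈ S) (hb : ∃ b, Sum.inr b ∈ S) :
    IsPowerDominatingSet G S := by
  obtain ⟨a, ha⟩ := ha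
  obtain ⟨b, hb⟩ := hb
  refine ⟨0, Set.eq_univ_of_forall fun v => ?_⟩
  cases v with
  | inl a' => exact Or.inr ⟨Sum.inr b, hb, by simp⟩
  | inr b' => exact Or.inr ⟨Sum.inl a, ha, by simp⟩

lemma helperB (hn : 1 ≤ n) {S : Set VV} (hne : S.Nonempty)
    (hS : S ⊆ Set.range Sum.inl) (hcard : m - 1 ≤ S.ncard) :
    IsPowerDominatingSet G S := by
  obtain ⟨x, hx⟩ := hne
  obtain ⟨a1, rfl⟩ := hS hx
  have hrange : (Set.range (Sum.inl : Fin m → VV)).ncard = m := by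
    rw [← Set.image_univ, Set.ncard_image_of_injective _ Sum.inl_injective,
      Set.ncard_univ, Nat.card_eq_fintype_card, Fintype.card_fin]
  have hd : (Set.range (Sum.inl : Fin m → VV) \ S).ncard ≤ 1 := by
    rw [Set.ncard_diff hS, hrange]
    omega
  rw [Set.ncard_le_one_iff_eq] at hd
  rcases hd with hd | ⟨w, hd⟩
  · -- S ⊇ range inl, so monitored 0 = univ
    have hSall : Set.range (Sum.inl : Fin m → VV) ⊆ S := by
      intro v hv
      by_contra h
      exact absurd hd (Set.nonempty_iff_ne_empty.mp ⟨v, hv, h⟩)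
    refine ⟨0, Set.eq_univ_of_forall fun v => ?_⟩
    cases v with
    | inl a' => exact Or.inl (hSall ⟨a', rfl⟩)
    | inr b' => exact Or.inr ⟨Sum.inl a1, hx, by simp⟩
  · -- exactly one left vertex missing
    obtain ⟨a0, ha0⟩ : ∃ a0, w = Sum.inl a0 := by
      have : w ∈ Set.range (Sum.inl : Fin m → VV) \ S := hd ▸ rfl
      obtain ⟨a0, h⟩ := this.1
      exact ⟨a0, h.symm⟩
    subst ha0
    have hw : Sum.inl a0 ∉ S := by
      have : Sum.inl a0 ∈ Set.range (Sum.inl : Fin m → VV) \ S := hd ▸ rfl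
      exact this.2
    have hmon0 : monitored G S 0 = {(Sum.inl a0 : VV)}ᶜ := by
      ext v
      simp only [monitored, closedNbhdSet, Set.mem_union, Set.mem_setOf_eq,
        Set.mem_compl_iff, Set.mem_singleton_iff]
      constructor
      · rintro (hv | ⟨u, hu, hadj⟩)
        · rintro rfl; exact hw hv
        · obtain ⟨a, rfl⟩ := hS hu
          rintro rfl
          simp [completeBipartiteGraph] at hadj
      · intro hv
        cases v with
        | inl a =>
          left
          by_contra h
          have : Sum.inl a ∈ Set.range (Sum.inl : Fin m → VV) \ S := ⟨⟨a, rfl⟩, h⟩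
          rw [hd] at this
          exact hv this
        | inr b => exact Or.inr ⟨Sum.inl a1, hx, by simp⟩
    refine ⟨1, Set.eq_univ_of_forall fun v => ?_⟩
    by_cases hv : v = Sum.inl a0
    · subst hv
      refine Or.inr ⟨Sum.inr ⟨0, hn⟩, by rw [hmon0]; simp, ?_⟩
      rw [hmon0]
      ext u
      simp only [Set.mem_diff, Set.mem_insert_iff, SimpleGraph.mem_neighborSet,
        Set.mem_compl_iff, Set.mem_singleton_iff, not_not]
      constructor
      · rintro ⟨_, h⟩; exact h
      · rintro rfl
        exact ⟨Or.inr (by simp), rfl⟩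
    · exact Or.inl (by rw [hmon0]; exact hv)

end helpers

section helpers2
variable {m n : ℕ}
local notation "G" => completeBipartiteGraph (Fin m) (Fin n)
local notation "VV" => (Fin m ⊕ Fin n)

lemma helperC (hm : 1 ≤ m) {S : Set VV} (hne : S.Nonempty)
    (hS : S ⊆ Set.range Sum.inr) (hcard : n - 1 ≤ S.ncard) :
    IsPowerDominatingSet G S := by
  obtain ⟨x, hx⟩ := hne
  obtain ⟨b1, rfl⟩ := hS hx
  have hrange : (Set.range (Sum.inr : Fin n → VV)).ncard = n := by
    rw [← Set.image_univ, Set.ncard_image_of_injective _ Sum.inr_injective,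
      Set.ncard_univ, Nat.card_eq_fintype_card, Fintype.card_fin]
  have hd : (Set.range (Sum.inr : Fin n → VV) \ S).ncard ≤ 1 := by
    rw [Set.ncard_diff hS, hrange]
    omega
  rw [Set.ncard_le_one_iff_eq] at hd
  rcases hd with hd | ⟨w, hd⟩
  · have hSall : Set.range (Sum.inr : Fin n → VV) ⊆ S := by
      intro v hv
      by_contra h
      exact absurd hd (Set.nonempty_iff_ne_empty.mp ⟨v, hv, h⟩)
    refine ⟨0, Set.eq_univ_of_forall fun v => ?_⟩
    cases v with
    | inr b' => exact Or.inl (hSall ⟨b', rfl⟩)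
    | inl a' => exact Or.inr ⟨Sum.inr b1, hx, by simp⟩
  · obtain ⟨b0, hb0⟩ : ∃ b0, w = Sum.inr b0 := by
      have : w ∈ Set.range (Sum.inr : Fin n → VV) \ S := hd ▸ rfl
      obtain ⟨b0, h⟩ := this.1
      exact ⟨b0, h.symm⟩
    subst hb0
    have hw : Sum.inr b0 ∉ S := by
      have : Sum.inr b0 ∈ Set.range (Sum.inr : Fin n → VV) \ S := hd ▸ rfl
      exact this.2
    have hmon0 : monitored G S 0 = {(Sum.inr b0 : VV)}ᶜ := by
      ext v
      simp only [monitored, closedNbhdSet, Set.mem_union, Set.mem_setOf_eq,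
        Set.mem_compl_iff, Set.mem_singleton_iff]
      constructor
      · rintro (hv | ⟨u, hu, hadj⟩)
        · rintro rfl; exact hw hv
        · obtain ⟨b, rfl⟩ := hS hu
          rintro rfl
          simp [completeBipartiteGraph] at hadj
      · intro hv
        cases v with
        | inr b =>
          left
          by_contra h
          have : Sum.inr b ∈ Set.range (Sum.inr : Fin n → VV) \ S := ⟨⟨b, rfl⟩, h⟩
          rw [hd] at this
          exact hv this
        | inl a => exact Or.inr ⟨Sum.inr b1, hx, by simp⟩
    refine ⟨1, Set.eq_univ_of_forall fun v => ?_⟩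
    by_cases hv : v = Sum.inr b0
    · subst hv
      refine Or.inr ⟨Sum.inl ⟨0, hm⟩, by rw [hmon0]; simp, ?_⟩
      rw [hmon0]
      ext u
      simp only [Set.mem_diff, Set.mem_insert_iff, SimpleGraph.mem_neighborSet,
        Set.mem_compl_iff, Set.mem_singleton_iff, not_not]
      constructor
      · rintro ⟨_, h⟩; exact h
      · rintro rfl
        exact ⟨Or.inr (by simp), rfl⟩
    · exact Or.inl (by rw [hmon0]; exact hv)

/-- Any nonempty set of size at least `m - 1` is a PDS. -/
lemma pds_of_card (hm : 1 ≤ m) (hn : 1 ≤ n) (hmn : n ≤ m) {S : Set VV}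
    (hne : S.Nonempty) (hcard : m - 1 ≤ S.ncard) :
    IsPowerDominatingSet G S := by
  by_cases ha : ∃ a, Sum.inl a ∈ S
  · by_cases hb : ∃ b, Sum.inr b ∈ S
    · exact helperA ha hb
    · push_neg at hb
      refine helperB hn hne ?_ hcard
      rintro (a | b) hv
      · exact ⟨a, rfl⟩
      · exact absurd hv (hb b)
  · push_neg at ha
    refine helperC hm hne ?_ (le_trans (by omega) hcard)
    rintro (a | b) hv
    · exact absurd hv (ha a)
    · exact ⟨b, rfl⟩

end helpers2

section witness
variable {m n : ℕ}
local notation "G" => completeBipartiteGraph (Fin m) (Fin n)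
local notation "VV" => (Fin m ⊕ Fin n)

lemma empty_not_pds (hm : 1 ≤ m) : ¬ IsPowerDominatingSet G (∅ : Set VV) := by
  have hmon : ∀ i, monitored G (∅ : Set VV) i = ∅ := by
    intro i
    induction i with
    | zero => simp [monitored, closedNbhdSet]
    | succ i ih => simp [monitored, ih]
  rintro ⟨i, hi⟩
  have : (Sum.inl ⟨0, hm⟩ : VV) ∈ monitored G (∅ : Set VV) i := hi ▸ Set.mem_univ _
  rw [hmon] at this
  exact this

lemma witness_fpds (hm : 2 ≤ m) :
    ∃ S : Set VV, ¬ IsPowerDominatingSet G S ∧ S.ncard = m - 2 := by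
  set S : Set VV := Set.range (fun i : Fin (m - 2) =>
    (Sum.inl (Fin.castLE (by omega) i) : VV)) with hSdef
  have hinj : Function.Injective (fun i : Fin (m - 2) =>
      (Sum.inl (Fin.castLE (by omega : m - 2 ≤ m) i) : VV)) :=
    Sum.inl_injective.comp (Fin.castLE_injective _)
  have hmemS : ∀ v : VV, v ∈ S ↔ ∃ a : Fin m, v = Sum.inl a ∧ (a : ℕ) < m - 2 := by
    intro v
    constructor
    · rintro ⟨i, rfl⟩
      exact ⟨Fin.castLE (by omega) i, rfl, by simpa using i.isLt⟩
    · rintro ⟨a, rfl, ha⟩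
      exact ⟨⟨(a : ℕ), ha⟩, by simp [Fin.ext_iff]⟩
  refine ⟨S, ?_, ?_⟩
  · -- not a PDS
    set M : Set VV := S ∪ Set.range Sum.inr with hMdef
    have hnotM : ∀ j : Fin m, m - 2 ≤ (j : ℕ) → (Sum.inl j : VV) ∉ M := by
      intro j hj hjM
      rcases hjM with hjS | ⟨b, hb⟩
      · obtain ⟨a, ha, ha2⟩ := (hmemS _).mp hjS
        rw [Sum.inl.injEq] at ha
        subst ha
        omega
      · exact absurd hb (by simp)
    have hsub : ∀ i, monitored G S i ⊆ M := by
      intro i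
      induction i with
      | zero =>
        rintro v (hv | ⟨u, hu, hadj⟩)
        · exact Or.inl hv
        · obtain ⟨a, rfl, -⟩ := (hmemS _).mp hu
          cases v with
          | inl a' => simp [completeBipartiteGraph] at hadj
          | inr b => exact Or.inr ⟨b, rfl⟩
      | succ i ih =>
        rintro w (hw | ⟨v, hv, hset⟩)
        · exact ih hw
        · have hwmem : w ∈ insert v ((completeBipartiteGraph (Fin m) (Fin n)).neighborSet v)
              \ monitored G S i := hset.symm.subset rfl
          rcases ih hv with hvS | ⟨b, rfl⟩
          · obtain ⟨a, rfl, -⟩ := (hmemS _).mp hvS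
            rcases hwmem.1 with rfl | hadj
            · exact Or.inl hvS
            · cases w with
              | inl a' => simp [completeBipartiteGraph] at hadj
              | inr b => exact Or.inr ⟨b, rfl⟩
          · -- v = inr b: two missing left vertices, contradiction
            exfalso
            have h1 : (Sum.inl ⟨m - 2, by omega⟩ : VV) ∈
                insert (Sum.inr b : VV) ((completeBipartiteGraph (Fin m) (Fin n)).neighborSet (Sum.inr b))
                  \ monitored G S i := by
              refine ⟨Or.inr (by simp [completeBipartiteGraph]), fun h => ?_⟩
              exact hnotM ⟨m - 2, by omega⟩ le_rfl (ih h)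
            have h2 : (Sum.inl ⟨m - 1, by omega⟩ : VV) ∈
                insert (Sum.inr b : VV) ((completeBipartiteGraph (Fin m) (Fin n)).neighborSet (Sum.inr b))
                  \ monitored G S i := by
              refine ⟨Or.inr (by simp [completeBipartiteGraph]), fun h => ?_⟩
              exact hnotM ⟨m - 1, by omega⟩ (by show m - 2 ≤ m - 1; omega) (ih h)
            rw [hset, Set.mem_singleton_iff] at h1 h2
            rw [← h2, Sum.inl.injEq, Fin.mk.injEq] at h1
            omega
    rintro ⟨i, hi⟩
    have : (Sum.inl ⟨m - 2, by omega⟩ : VV) ∈ monitored G S i := hi ▸ Set.mem_univ _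
    exact hnotM ⟨m - 2, by omega⟩ le_rfl (hsub i this)
  · rw [hSdef, ← Set.image_univ, Set.ncard_image_of_injective _ hinj,
      Set.ncard_univ, Nat.card_eq_fintype_card, Fintype.card_fin]

end witness


theorem failedPowerDominationNumber_completeBipartiteGraph_aux
    (m n : ℕ) (hn : 1 ≤ n) (hmn : n ≤ m) :
    (2 ≤ m →
      sSup {k | ∃ S : Set (Fin m ⊕ Fin n),
        ¬ IsPowerDominatingSet (completeBipartiteGraph (Fin m) (Fin n)) S ∧ S.ncard = k}
        = m - 2) ∧
    (m = 1 →
      sSup {k | ∃ S : Set (Fin m ⊕ Fin n),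
        ¬ IsPowerDominatingSet (completeBipartiteGraph (Fin m) (Fin n)) S ∧ S.ncard = k}
        = 0) := by
  have hm : 1 ≤ m := le_trans hn hmn
  have hbound : ∀ k ∈ {k | ∃ S : Set (Fin m ⊕ Fin n),
      ¬ IsPowerDominatingSet (completeBipartiteGraph (Fin m) (Fin n)) S ∧ S.ncard = k},
      k ≤ m - 2 := by
    rintro k ⟨S, hS, rfl⟩
    by_contra hk
    push_neg at hk
    have hcard : m - 1 ≤ S.ncard := by omega
    have hne : S.Nonempty := by
      rw [Set.nonempty_iff_ne_empty]
      rintro rfl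
      simp at hk
    exact hS (pds_of_card hm hn hmn hne hcard)
  constructor
  · intro hm2
    refine le_antisymm (csSup_le ⟨m - 2, witness_fpds hm2⟩ hbound)
      (le_csSup ⟨m - 2, hbound⟩ (witness_fpds hm2))
  · intro hm1
    subst hm1
    have h0 : (0 : ℕ) ∈ {k | ∃ S : Set (Fin 1 ⊕ Fin n),
        ¬ IsPowerDominatingSet (completeBipartiteGraph (Fin 1) (Fin n)) S ∧ S.ncard = k} :=
      ⟨∅, empty_not_pds le_rfl, by simp⟩
    exact Nat.le_zero.mp (csSup_le ⟨0, h0⟩ (by simpa using hbound))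

theorem failedPowerDominationNumber_completeBipartiteGraph
    (m n : ℕ) (hn : 1 ≤ n) (hmn : n ≤ m) :
    (2 ≤ m →
      failedPowerDominationNumber (completeBipartiteGraph (Fin m) (Fin n)) = m - 2) ∧
    (m = 1 →
      failedPowerDominationNumber (completeBipartiteGraph (Fin m) (Fin n)) = 0) :=
  failedPowerDominationNumber_completeBipartiteGraph_aux m n hn hmn
end
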